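/- arXiv:1410.7441 — 9 statements merged into one kernel-verified Lean document; each statement's English description precedes it below -/
import Mathlib

section
/- For any square matrix X ∈ Mₙ(ℂ), trace X = 0 if and only if there exists an orthonormal basis {f₁,…,fₙ} of ℂⁿ such that ⟨X fⱼ, fⱼ⟩ = 0 for all j = 1,…,n. -/
/-!
The numerical range `W(T) = {⟪x, T x⟫ | ‖x‖ = 1}` of an operator on a complex inner product
space is convex (Toeplitz–Hausdorff). After an affine change of `T`, two points of `W(T)` become
`0` and `1`, attained at unit vectors `x` and `y`; multiplying `x` by a phase makes the quadratic
form real along the real segment from `x` to `y`, and the intermediate value theorem fills `[0, 1]`.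

If `trace T = 0`, then `0`, the mean of the diagonal entries of `T` in any orthonormal basis, lies
in `W(T)`, so `⟪w, T w⟫ = 0` for some unit `w`. The compression of `T` to `wᗮ` again has trace
zero, and induction on the dimension produces the basis.
-/

open Module ComplexConjugate
open scoped InnerProductSpace

namespace LinearMap

variable {𝕜 E : Type*} [RCLike 𝕜] [NormedAddCommGroup E] [InnerProductSpace 𝕜 E]

def numericalRange (T : E →ₗ[𝕜] E) : Set 𝕜 := {z | ∃ x : E, ‖x‖ = 1 ∧ ⟪x, T x⟫_𝕜 = z}

theorem inner_map_self_div_norm_sq_mem_numericalRange (T : E →ₗ[𝕜] E) {x : E} (hx : x ≠ 0) :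
    ⟪x, T x⟫_𝕜 / (‖x‖ : 𝕜) ^ 2 ∈ numericalRange T := by
  refine ⟨(‖x‖⁻¹ : 𝕜) • x, norm_smul_inv_norm hx, ?_⟩
  rw [map_smul, inner_smul_left, inner_smul_right, RCLike.conj_inv, RCLike.conj_ofReal]
  field_simp

theorem numericalRange_smul_sub_smul_one (T : E →ₗ[𝕜] E) (a c : 𝕜) :
    numericalRange (c • (T - a • 1)) = (fun z => c * (z - a)) '' numericalRange T := by
  ext z
  simp only [numericalRange, Set.mem_ofPred_eq, Set.mem_image]
  constructor
  · rintro ⟨x, hx, rfl⟩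
    refine ⟨_, ⟨x, hx, rfl⟩, ?_⟩
    simp [inner_sub_right, inner_smul_right, inner_self_eq_norm_sq_to_K, hx]
  · rintro ⟨_, ⟨x, hx, rfl⟩, rfl⟩
    refine ⟨x, hx, ?_⟩
    simp [inner_sub_right, inner_smul_right, inner_self_eq_norm_sq_to_K, hx]

noncomputable def compression (K : Submodule 𝕜 E) [K.HasOrthogonalProjection]
    (T : E →ₗ[𝕜] E) : K →ₗ[𝕜] K :=
  K.orthogonalProjectionOnto.toLinearMap ∘ₗ T ∘ₗ K.subtype

theorem inner_compression {K : Submodule 𝕜 E} [K.HasOrthogonalProjection] (T : E →ₗ[𝕜] E)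
    (x y : K) : ⟪x, compression K T y⟫_𝕜 = ⟪(x : E), T y⟫_𝕜 :=
  Submodule.inner_orthogonalProjectionOnto_eq_of_mem_left x (T y)

end LinearMap

theorem Complex.exists_norm_eq_one_im_conj_mul_add_mul_eq_zero (p q : ℂ) :
    ∃ ζ : ℂ, ‖ζ‖ = 1 ∧ (conj ζ * p + ζ * q).im = 0 := by
  -- `conj ζ * p + ζ * q` has the imaginary part of `conj ζ * (p - conj q)`
  set d := p - conj q
  by_cases hd : d = 0
  · refine ⟨1, by simp, ?_⟩
    have : p = conj q := sub_eq_zero.mp hd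
    simp [this]
  · refine ⟨d / ‖d‖, by simp [hd], ?_⟩
    simp only [Complex.add_im, Complex.mul_im, Complex.conj_re, Complex.conj_im,
      Complex.div_ofReal_re, Complex.div_ofReal_im, d, Complex.sub_re, Complex.sub_im]
    field_simp
    ring

namespace OrthonormalBasis

variable {𝕜 E : Type*} [RCLike 𝕜] [NormedAddCommGroup E] [InnerProductSpace 𝕜 E]

theorem orthonormal_vecCons {n : ℕ} {w : E} (hw : ‖w‖ = 1)
    (g : OrthonormalBasis (Fin n) 𝕜 (𝕜 ∙ w)ᗮ) :
    Orthonormal 𝕜 (Matrix.vecCons w fun i => (g i : E)) :=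
  orthonormal_vecCons_iff.mpr ⟨hw, fun i => Submodule.inner_right_of_mem_orthogonal
    (Submodule.mem_span_singleton_self w) (g i).2,
    g.orthonormal.comp_linearIsometry (Submodule.subtypeₗᵢ _)⟩

variable [FiniteDimensional 𝕜 E]

noncomputable def consOrthogonal {n : ℕ} {w : E} (hw : ‖w‖ = 1)
    (g : OrthonormalBasis (Fin n) 𝕜 (𝕜 ∙ w)ᗮ) : OrthonormalBasis (Fin (n + 1)) 𝕜 E :=
  have hcard : Fintype.card (Fin (n + 1)) = finrank 𝕜 E := by
    rw [← Submodule.finrank_add_finrank_orthogonal (𝕜 ∙ w), finrank_span_singleton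
      (norm_ne_zero_iff.mp (hw ▸ one_ne_zero)), finrank_eq_card_basis g.toBasis]
    simp [add_comm]
  OrthonormalBasis.mk (orthonormal_vecCons hw g)
    ((orthonormal_vecCons hw g).linearIndependent.span_eq_top_of_card_eq_finrank hcard).ge

@[simp]
theorem coe_consOrthogonal {n : ℕ} {w : E} (hw : ‖w‖ = 1)
    (g : OrthonormalBasis (Fin n) 𝕜 (𝕜 ∙ w)ᗮ) :
    ⇑(consOrthogonal hw g) = Matrix.vecCons w fun i => (g i : E) :=
  OrthonormalBasis.coe_mk (orthonormal_vecCons hw g) _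

end OrthonormalBasis

namespace LinearMap

section RCLike

variable {𝕜 E : Type*} [RCLike 𝕜] [NormedAddCommGroup E] [InnerProductSpace 𝕜 E]
  [FiniteDimensional 𝕜 E]

theorem trace_eq_inner_add_trace_compression (T : E →ₗ[𝕜] E) {w : E} (hw : ‖w‖ = 1) :
    trace 𝕜 E T = ⟪w, T w⟫_𝕜 + trace 𝕜 _ (compression (𝕜 ∙ w)ᗮ T) := by
  let g := stdOrthonormalBasis 𝕜 (𝕜 ∙ w)ᗮ
  rw [trace_eq_sum_inner T (OrthonormalBasis.consOrthogonal hw g),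
    trace_eq_sum_inner _ g, Fin.sum_univ_succ]
  simp only [OrthonormalBasis.coe_consOrthogonal, Matrix.cons_val_zero, Matrix.cons_val_succ,
    inner_compression]

end RCLike

variable {E : Type*} [NormedAddCommGroup E] [InnerProductSpace ℂ E]

theorem ofReal_mem_numericalRange_of_im_eq_zero {S : E →ₗ[ℂ] E} {x y : E}
    (hx : ‖x‖ = 1) (hy : ‖y‖ = 1) (hSx : ⟪x, S x⟫_ℂ = 0) (hSy : ⟪y, S y⟫_ℂ = 1)
    (him : (⟪x, S y⟫_ℂ + ⟪y, S x⟫_ℂ).im = 0) {t : ℝ} (ht : t ∈ Set.Icc (0 : ℝ) 1) :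
    (t : ℂ) ∈ numericalRange S := by
  set c := (⟪x, S y⟫_ℂ + ⟪y, S x⟫_ℂ).re
  set w : ℝ → E := fun s => ((1 - s : ℝ) : ℂ) • x + (s : ℂ) • y
  have hw : ∀ s : ℝ, ⟪w s, S (w s)⟫_ℂ = ((s ^ 2 + s * (1 - s) * c : ℝ) : ℂ) := by
    intro s
    have hc : ⟪x, S y⟫_ℂ + ⟪y, S x⟫_ℂ = c := by
      rw [← Complex.re_add_im (_ + _), him]; simp [c]
    simp only [w, map_add, map_smul, inner_add_left, inner_add_right, inner_smul_left,
      inner_smul_right, Complex.conj_ofReal, hSx, hSy]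
    push_cast
    linear_combination (s * (1 - s) : ℂ) * hc
  -- `y` is not a multiple of `x`, since the quadratic form vanishes at `x` but not at `y`
  have hw0 : ∀ s ∈ Set.Icc (0 : ℝ) 1, w s ≠ 0 := by
    rintro s ⟨hs0, -⟩ hws
    rcases hs0.eq_or_lt with rfl | hs
    · simp [w] at hws; simp [hws] at hx
    have hsy : (s : ℂ) • y = -((1 - s : ℝ) : ℂ) • x := by
      rw [neg_smul, eq_neg_iff_add_eq_zero, add_comm]; exact hws
    have := congrArg (fun v => ⟪v, S v⟫_ℂ) hsy
    simp only [map_smul, inner_smul_left, inner_smul_right, hSx, hSy, Complex.conj_ofReal,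
      map_neg, mul_zero, mul_one] at this
    have : s * s = 0 := by exact_mod_cast this
    nlinarith
  set g : ℝ → ℝ := fun s => (s ^ 2 + s * (1 - s) * c) / ‖w s‖ ^ 2
  have hg : ContinuousOn g (Set.Icc 0 1) := by
    refine ContinuousOn.div (by fun_prop) (by fun_prop) fun s hs => ?_
    exact pow_ne_zero _ (norm_ne_zero_iff.mpr (hw0 s hs))
  obtain ⟨s, hs, hgs⟩ : t ∈ g '' Set.Icc 0 1 :=
    intermediate_value_Icc zero_le_one hg (by simpa [g, w, hx, hy] using ht)
  simpa [hw, ← hgs, g] using inner_map_self_div_norm_sq_mem_numericalRange S (hw0 s hs)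

theorem ofReal_mem_numericalRange {S : E →ₗ[ℂ] E} (h0 : 0 ∈ numericalRange S)
    (h1 : 1 ∈ numericalRange S) {t : ℝ} (ht : t ∈ Set.Icc (0 : ℝ) 1) :
    (t : ℂ) ∈ numericalRange S := by
  obtain ⟨x, hx, hSx⟩ := h0
  obtain ⟨y, hy, hSy⟩ := h1
  obtain ⟨ζ, hζ, him⟩ :=
    Complex.exists_norm_eq_one_im_conj_mul_add_mul_eq_zero ⟪x, S y⟫_ℂ ⟪y, S x⟫_ℂ
  refine ofReal_mem_numericalRange_of_im_eq_zero (x := ζ • x) ?_ hy ?_ hSy ?_ ht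
  · rw [norm_smul, hζ, hx, one_mul]
  · simp [hSx]
  · rwa [map_smul, inner_smul_left, inner_smul_right]

/-- **Toeplitz–Hausdorff theorem** -/
theorem convex_numericalRange (T : E →ₗ[ℂ] E) : Convex ℝ (numericalRange T) := by
  rw [convex_iff_segment_subset]
  intro a ha b hb
  rw [segment_eq_image']
  rintro _ ⟨t, ht, rfl⟩
  rcases eq_or_ne a b with rfl | hab
  · simpa using ha
  have hba : b - a ≠ 0 := sub_ne_zero.mpr hab.symm
  have key := ofReal_mem_numericalRange (S := (b - a)⁻¹ • (T - a • 1))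
    (by rw [numericalRange_smul_sub_smul_one]; exact ⟨a, ha, by simp⟩)
    (by rw [numericalRange_smul_sub_smul_one]; exact ⟨b, hb, inv_mul_cancel₀ hba⟩) ht
  rw [numericalRange_smul_sub_smul_one] at key
  obtain ⟨z, hz, hzt⟩ := key
  convert hz using 1
  simp only [Complex.real_smul, ← hzt]
  field_simp
  ring

theorem zero_mem_numericalRange_of_trace_eq_zero [FiniteDimensional ℂ E] [Nontrivial E]
    {T : E →ₗ[ℂ] E} (hT : trace ℂ E T = 0) : 0 ∈ numericalRange T := by
  let b := stdOrthonormalBasis ℂ E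
  have hmem := (convex_numericalRange T).centerMass_mem (t := Finset.univ)
    (w := fun _ => (1 : ℝ)) (z := fun i => ⟪b i, T (b i)⟫_ℂ) (fun _ _ => zero_le_one)
    (by simpa using finrank_pos) (fun i _ => ⟨b i, b.orthonormal.norm_eq_one i, rfl⟩)
  simpa [Finset.centerMass, ← trace_eq_sum_inner, hT] using hmem

theorem exists_orthonormalBasis_inner_map_self_eq_zero [FiniteDimensional ℂ E] {n : ℕ}
    (hn : finrank ℂ E = n) {T : E →ₗ[ℂ] E} (hT : trace ℂ E T = 0) :
    ∃ f : OrthonormalBasis (Fin n) ℂ E, ∀ j, ⟪f j, T (f j)⟫_ℂ = 0 := by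
  induction n generalizing E with
  | zero => exact ⟨(stdOrthonormalBasis ℂ E).reindex (finCongr hn), fun j => j.elim0⟩
  | succ n ih =>
    have : Nontrivial E := Module.nontrivial_of_finrank_eq_succ hn
    have : Fact (finrank ℂ E = n + 1) := ⟨hn⟩
    obtain ⟨w, hw, hTw⟩ := zero_mem_numericalRange_of_trace_eq_zero hT
    obtain ⟨g, hg⟩ := ih
      (Submodule.finrank_orthogonal_span_singleton (norm_ne_zero_iff.mp (hw ▸ one_ne_zero)))
      (T := compression (ℂ ∙ w)ᗮ T)
      (by simpa [hT, hTw] using (trace_eq_inner_add_trace_compression T hw).symm)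
    refine ⟨OrthonormalBasis.consOrthogonal hw g, Fin.cases ?_ fun j => ?_⟩
    · simpa using hTw
    · rw [OrthonormalBasis.coe_consOrthogonal, Matrix.cons_val_succ, ← inner_compression]
      exact hg j

end LinearMap

/-- For `X ∈ Mₙ(ℂ)`, `trace X = 0` iff there is an orthonormal basis
`{f j}` of `ℂⁿ` in which `X` has zero diagonal, i.e. `⟨X f j, f j⟩ = 0` for all `j`. -/
theorem trace_zero_iff_zero_diagonal {n : ℕ} (X : Matrix (Fin n) (Fin n) ℂ) :
    X.trace = 0 ↔
      ∃ f : OrthonormalBasis (Fin n) ℂ (EuclideanSpace ℂ (Fin n)),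
        ∀ j, (inner ℂ (f j) (Matrix.toEuclideanLin X (f j)) : ℂ) = 0 := by
  have htr : LinearMap.trace ℂ _ (Matrix.toEuclideanLin X) = X.trace := by
    rw [Matrix.toEuclideanLin_eq_toLin_orthonormal,
      LinearMap.trace_eq_matrix_trace ℂ (EuclideanSpace.basisFun _ ℂ).toBasis,
      LinearMap.toMatrix_toLin]
  constructor
  · intro hX
    exact LinearMap.exists_orthonormalBasis_inner_map_self_eq_zero finrank_euclideanSpace_fin
      (htr.trans hX)
  · rintro ⟨f, hf⟩
    rw [← htr, LinearMap.trace_eq_sum_inner _ f]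
    exact Finset.sum_eq_zero fun j _ => hf j
end

section
/- Let X ∈ Mₙ(ℂ) and λ ∈ ℂ. Then trace X = nλ if and only if there exists an orthonormal basis {f₁,…,fₙ} of ℂⁿ with ⟨X fⱼ, fⱼ⟩ = λ for every j. -/
/-!
Induct on the dimension. It suffices to find a unit vector `w` with `⟪w, T w⟫ = λ`: the
compression of `T` to `wᗮ` then has trace `(n - 1) λ`, and an orthonormal basis of `wᗮ` with
constant diagonal `λ`, extended by `w`, is the required basis. To find `w`, compress `T` to
`eᗮ` for an arbitrary unit vector `e`; by induction `eᗮ` contains a unit vector `u` with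
`⟪u, T u⟫ = μ`, the mean diagonal value of the compression. Then `λ` lies on the segment between
`μ` and `⟪e, T e⟫`, and every point of that segment is a value of `⟪w, T w⟫` on the unit sphere
of `span {u, e}` (the two-dimensional case of the Toeplitz–Hausdorff theorem).
-/

open scoped InnerProductSpace ComplexConjugate
open Module

theorem Complex.exists_norm_eq_one_mul_add_conj_mul_eq_real_mul (p q : ℂ) {z : ℂ} (hz : z ≠ 0) :
    ∃ β : ℂ, ‖β‖ = 1 ∧ ∃ r : ℝ, β * p + conj β * q = r * z := by
  obtain ⟨β, hβ, hβC⟩ := Complex.exists_norm_eq_mul_self (p * conj z - conj q * z)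
  set c := β * p + conj β * q
  set x := β * conj q * z
  have hc_real : c * conj z = ((c * conj z).re : ℂ) := by
    refine Complex.ext rfl ?_
    have : c * conj z = β * (p * conj z - conj q * z) + (x + conj x) := by
      simp only [c, x, map_mul, Complex.conj_conj]; ring
    rw [this, Complex.add_conj, ← hβC]; simp
  refine ⟨β, hβ, (c * conj z).re / Complex.normSq z, ?_⟩
  have hz' : conj z ≠ 0 := (map_ne_zero _).2 hz
  rw [Complex.ofReal_div, ← hc_real, ← Complex.mul_conj]
  field_simp
  rfl

open Real in
theorem Real.exists_sq_add_sq_eq_one_and_sq_add_mul_mul_eq (r : ℝ) {t : ℝ}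
    (ht : t ∈ Set.Icc 0 1) : ∃ c s : ℝ, c ^ 2 + s ^ 2 = 1 ∧ c ^ 2 + r * s * c = t := by
  have hcont : ContinuousOn (fun θ => cos θ ^ 2 + r * sin θ * cos θ) (Set.Icc 0 (π / 2)) := by
    fun_prop
  obtain ⟨θ, -, hθ⟩ := intermediate_value_Icc' (by positivity) hcont (by simpa using ht)
  exact ⟨cos θ, sin θ, cos_sq_add_sin_sq θ, hθ⟩

theorem Orthonormal.finCons {𝕜 E : Type*} [RCLike 𝕜] [NormedAddCommGroup E]
    [InnerProductSpace 𝕜 E] {N : ℕ} {w : E} (hw : ‖w‖ = 1) {g : Fin N → E}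
    (hg : Orthonormal 𝕜 g) (hwg : ∀ j, ⟪w, g j⟫_𝕜 = 0) :
    Orthonormal 𝕜 (Fin.cons w g : Fin (N + 1) → E) := by
  refine ⟨Fin.cases (by simpa using hw) (by simpa using hg.1), fun i j hij => ?_⟩
  cases i using Fin.cases <;> cases j using Fin.cases
  · exact absurd rfl hij
  · simpa using hwg _
  · simpa [inner_eq_zero_symm] using hwg _
  · exact hg.2 (by simpa [Fin.succ_inj] using hij)

section RCLike

variable {𝕜 E : Type*} [RCLike 𝕜] [NormedAddCommGroup E] [InnerProductSpace 𝕜 E]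

theorem OrthonormalBasis.exists_coe_eq_finCons [FiniteDimensional 𝕜 E] {N : ℕ}
    (hE : finrank 𝕜 E = N + 1) {w : E} (hw : ‖w‖ = 1) (g : OrthonormalBasis (Fin N) 𝕜 (𝕜 ∙ w)ᗮ) :
    ∃ b : OrthonormalBasis (Fin (N + 1)) 𝕜 E, ⇑b = Fin.cons w (fun j => (g j : E)) := by
  have hon : Orthonormal 𝕜 (Fin.cons w (fun j => (g j : E)) : Fin (N + 1) → E) :=
    Orthonormal.finCons hw (g.orthonormal.comp_linearIsometry (𝕜 ∙ w)ᗮ.subtypeₗᵢ)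
      fun j => Submodule.mem_orthogonal_singleton_iff_inner_right.1 (g j).2
  have hcard : Fintype.card (Fin (N + 1)) = finrank 𝕜 E := by simp [hE]
  exact ⟨(basisOfOrthonormalOfCardEqFinrank hon hcard).toOrthonormalBasis
      (by rwa [coe_basisOfOrthonormalOfCardEqFinrank]),
    by rw [Basis.coe_toOrthonormalBasis, coe_basisOfOrthonormalOfCardEqFinrank]⟩

namespace LinearMap

noncomputable def compress (T : E →ₗ[𝕜] E) (K : Submodule 𝕜 E) [K.HasOrthogonalProjection] :
    K →ₗ[𝕜] K :=
  K.orthogonalProjectionOnto.toLinearMap ∘ₗ T ∘ₗ K.subtype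

theorem inner_compress_apply_self (T : E →ₗ[𝕜] E) (K : Submodule 𝕜 E)
    [K.HasOrthogonalProjection] (x : K) : ⟪x, T.compress K x⟫_𝕜 = ⟪(x : E), T x⟫_𝕜 :=
  K.inner_orthogonalProjectionOnto_eq_of_mem_left x (T x)

theorem trace_eq_inner_add_trace_compress [FiniteDimensional 𝕜 E] {N : ℕ}
    (hE : finrank 𝕜 E = N + 1) (T : E →ₗ[𝕜] E) {w : E} (hw : ‖w‖ = 1) :
    trace 𝕜 E T = ⟪w, T w⟫_𝕜 + trace 𝕜 _ (T.compress (𝕜 ∙ w)ᗮ) := by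
  have : Fact (finrank 𝕜 E = N + 1) := ⟨hE⟩
  have hK : finrank 𝕜 (𝕜 ∙ w)ᗮ = N :=
    Submodule.finrank_orthogonal_span_singleton (norm_ne_zero_iff.1 (hw ▸ one_ne_zero))
  set g := (stdOrthonormalBasis 𝕜 (𝕜 ∙ w)ᗮ).reindex (finCongr hK)
  obtain ⟨b, hb⟩ := OrthonormalBasis.exists_coe_eq_finCons hE hw g
  rw [trace_eq_sum_inner T b, trace_eq_sum_inner _ g, hb, Fin.sum_univ_succ]
  simp only [Fin.cons_zero, Fin.cons_succ, inner_compress_apply_self]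

end LinearMap

end RCLike

namespace LinearMap

variable {E : Type*} [NormedAddCommGroup E] [InnerProductSpace ℂ E]

/-- The value is attained at `w = c • u + (s * β) • v`, where `β` is a phase making the
off-diagonal term `β ⟪u, T v⟫ + β̄ ⟪v, T u⟫` a real multiple `r (a - b)` of `a - b`; then
`⟪w, T w⟫ = b + (c² + r s c) (a - b)`. -/
theorem exists_norm_eq_one_inner_map_self_eq_mul_add_mul (T : E →ₗ[ℂ] E) {u v : E}
    (hu : ‖u‖ = 1) (hv : ‖v‖ = 1) (huv : ⟪u, v⟫_ℂ = 0) {t : ℝ} (ht : t ∈ Set.Icc 0 1) :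
    ∃ w : E, ‖w‖ = 1 ∧ ⟪w, T w⟫_ℂ = t * ⟪u, T u⟫_ℂ + (1 - t) * ⟪v, T v⟫_ℂ := by
  set a := ⟪u, T u⟫_ℂ
  set b := ⟪v, T v⟫_ℂ
  by_cases hab : a = b
  · exact ⟨u, hu, by rw [← hab]; ring⟩
  obtain ⟨β, hβ, r, hr⟩ := Complex.exists_norm_eq_one_mul_add_conj_mul_eq_real_mul
    ⟪u, T v⟫_ℂ ⟪v, T u⟫_ℂ (sub_ne_zero.2 hab)
  obtain ⟨c, s, hcs, hct⟩ := Real.exists_sq_add_sq_eq_one_and_sq_add_mul_mul_eq r ht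
  have hββ : conj β * β = 1 := by rw [Complex.conj_mul', hβ]; simp
  refine ⟨(c : ℂ) • u + (s * β : ℂ) • v, ?_, ?_⟩
  · have horth : ⟪(c : ℂ) • u, (s * β : ℂ) • v⟫_ℂ = 0 := by
      rw [inner_smul_left, inner_smul_right, huv, mul_zero, mul_zero]
    have hsq : ‖(c : ℂ) • u + (s * β : ℂ) • v‖ ^ 2 = 1 := by
      rw [@norm_add_sq ℂ, horth, norm_smul, norm_smul, norm_mul, hu, hv, hβ]
      simpa using hcs
    exact (pow_eq_one_iff_of_nonneg (norm_nonneg _) two_ne_zero).1 hsq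
  · have hcsC : (c : ℂ) ^ 2 + (s : ℂ) ^ 2 = 1 := by exact_mod_cast hcs
    simp only [map_add, map_smul, inner_add_left, inner_add_right, inner_smul_left,
      inner_smul_right, map_mul, Complex.conj_ofReal]
    rw [← hct]
    push_cast
    linear_combination (c * s : ℂ) * hr + (s : ℂ) ^ 2 * b * hββ + b * hcsC

theorem exists_orthonormalBasis_inner_map_self_eq [FiniteDimensional ℂ E] {N : ℕ}
    (hE : finrank ℂ E = N) (T : E →ₗ[ℂ] E) {lam : ℂ} (htr : trace ℂ E T = N * lam) :
    ∃ f : OrthonormalBasis (Fin N) ℂ E, ∀ j, ⟪f j, T (f j)⟫_ℂ = lam := by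
  induction N generalizing E lam with
  | zero => exact ⟨(stdOrthonormalBasis ℂ E).reindex (finCongr hE), fun j => j.elim0⟩
  | succ N ih =>
    have hK {w : E} (hw : ‖w‖ = 1) : finrank ℂ (ℂ ∙ w)ᗮ = N :=
      have : Fact (finrank ℂ E = N + 1) := ⟨hE⟩
      Submodule.finrank_orthogonal_span_singleton (norm_ne_zero_iff.1 (hw ▸ one_ne_zero))
    push_cast at htr
    obtain ⟨w, hw, hwT⟩ : ∃ w : E, ‖w‖ = 1 ∧ ⟪w, T w⟫_ℂ = lam := by
      set e := (stdOrthonormalBasis ℂ E).reindex (finCongr hE) 0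
      have he : ‖e‖ = 1 := OrthonormalBasis.orthonormal _ |>.1 0
      have htrT := trace_eq_inner_add_trace_compress hE T he
      rcases N.eq_zero_or_pos with rfl | hN
      · let g := (stdOrthonormalBasis ℂ (ℂ ∙ e)ᗮ).reindex (finCongr (hK he))
        refine ⟨e, he, ?_⟩
        simpa [trace_eq_sum_inner _ g, htr] using htrT.symm
      · have hN0 : (N : ℂ) ≠ 0 := by exact_mod_cast hN.ne'
        obtain ⟨g, hg⟩ := ih (hK he) (T.compress (ℂ ∙ e)ᗮ)
          (lam := trace ℂ _ (T.compress (ℂ ∙ e)ᗮ) / N) (mul_div_cancel₀ _ hN0).symm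
        have hu : ‖(g ⟨0, hN⟩ : E)‖ = 1 := g.orthonormal.1 ⟨0, hN⟩
        have hue : ⟪(g ⟨0, hN⟩ : E), e⟫_ℂ = 0 :=
          Submodule.mem_orthogonal_singleton_iff_inner_left.1 (g ⟨0, hN⟩).2
        obtain ⟨w, hw, hwT⟩ := exists_norm_eq_one_inner_map_self_eq_mul_add_mul T hu he hue
          (t := N / (N + 1)) ⟨by positivity, div_le_one_of_le₀ (by linarith) (by positivity)⟩
        refine ⟨w, hw, ?_⟩
        rw [hwT, ← inner_compress_apply_self, hg]
        push_cast
        field_simp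
        linear_combination htrT.symm.trans htr
    obtain ⟨g, hg⟩ := ih (hK hw) (T.compress (ℂ ∙ w)ᗮ) (lam := lam)
      (by linear_combination (trace_eq_inner_add_trace_compress hE T hw).symm.trans htr - hwT)
    obtain ⟨f, hf⟩ := OrthonormalBasis.exists_coe_eq_finCons hE hw g
    exact ⟨f, Fin.cases (by simpa [hf]) fun j => by
      simpa [hf] using (inner_compress_apply_self T _ (g j)).symm.trans (hg j)⟩

end LinearMap

theorem Matrix.trace_toEuclideanLin {n : Type*} [Fintype n] [DecidableEq n]
    (X : Matrix n n ℂ) : LinearMap.trace ℂ _ (Matrix.toEuclideanLin X) = X.trace := by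
  simp [Matrix.toLpLin_eq_toLin]

/-- For `X ∈ Mₙ(ℂ)` and `λ ∈ ℂ`, `trace X = nλ` iff there is an
orthonormal basis `{f j}` of `ℂⁿ` with `⟨X f j, f j⟩ = λ` for every `j`. -/
theorem trace_eq_smul_iff_constant_diagonal {n : ℕ} (X : Matrix (Fin n) (Fin n) ℂ) (lam : ℂ) :
    X.trace = (n : ℂ) * lam ↔
      ∃ f : OrthonormalBasis (Fin n) ℂ (EuclideanSpace ℂ (Fin n)),
        ∀ j, (inner ℂ (f j) (Matrix.toEuclideanLin X (f j)) : ℂ) = lam := by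
  rw [← Matrix.trace_toEuclideanLin]
  refine ⟨LinearMap.exists_orthonormalBasis_inner_map_self_eq finrank_euclideanSpace_fin _, ?_⟩
  rintro ⟨f, hf⟩
  simp [LinearMap.trace_eq_sum_inner _ f, hf]
end

section
/- Let ℐ be a two-sided ideal of B(H), B = B* ∈ ℐ, and A = A* ∈ B(H). Then the positive part A₊ belongs to ℐ if and only if (A+B)₊ belongs to ℐ. Similarly, A₋ ∈ ℐ if and only if (A+B)₋ ∈ ℐ. -/
/-!
Two-sided ideals of `B(H)` are hereditary: if `0 ≤ S ≤ T` then `‖√S x‖ ≤ ‖√T x‖` for all `x`,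
so Douglas factorization gives `√S = c √T` and hence `S = c T c*`.
If `A₊ - A₋ ≤ X` with `X ∈ ℐ`, compressing by the projection `Q` onto `ker A₋`, which contains
the range of `A₊`, gives `A₊ = Q (A₊ - A₋) Q ≤ Q X Q ∈ ℐ`. The four implications are instances
of this, using `A ≤ (A + B)₊ - B`, `A + B ≤ A₊ + B` and the same inequalities for `-A`, `-B`.
-/

open ContinuousLinearMap

theorem IsSelfAdjoint.mul_eq_zero_comm {R : Type*} [NonUnitalSemiring R] [StarRing R] {a b : R}
    (ha : IsSelfAdjoint a) (hb : IsSelfAdjoint b) : a * b = 0 ↔ b * a = 0 := by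
  constructor <;> intro h <;> simpa [ha.star_eq, hb.star_eq] using congrArg star h

theorem ContinuousLinearMap.norm_apply_le_of_star_mul_self_le {𝕜 H : Type*} [RCLike 𝕜]
    [NormedAddCommGroup H] [InnerProductSpace 𝕜 H] [CompleteSpace H] {a b : H →L[𝕜] H}
    (hab : star a * a ≤ star b * b) (x : H) : ‖a x‖ ≤ ‖b x‖ := by
  have hsq : ‖a x‖ ^ 2 ≤ ‖b x‖ ^ 2 := by
    rw [apply_norm_sq_eq_inner_adjoint_left, apply_norm_sq_eq_inner_adjoint_left,
      ← sub_nonneg, ← map_sub, ← inner_sub_left]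
    exact hab.re_inner_nonneg_left x
  exact (pow_le_pow_iff_left₀ (norm_nonneg _) (norm_nonneg _) two_ne_zero).mp hsq

theorem ContinuousLinearMap.exists_comp_eq_of_norm_apply_le {𝕜 E F G : Type*} [RCLike 𝕜]
    [NormedAddCommGroup E] [NormedSpace 𝕜 E]
    [NormedAddCommGroup F] [InnerProductSpace 𝕜 F] [CompleteSpace F]
    [NormedAddCommGroup G] [NormedSpace 𝕜 G] [CompleteSpace G]
    (t : E →L[𝕜] F) (s : E →L[𝕜] G) (h : ∀ x, ‖s x‖ ≤ ‖t x‖) :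
    ∃ c : F →L[𝕜] G, c ∘L t = s := by
  set R := LinearMap.range (t : E →ₗ[𝕜] F)
  set K := R.topologicalClosure
  let e : E →ₗ[𝕜] K := (t : E →ₗ[𝕜] F).codRestrict K
    fun x ↦ R.le_topologicalClosure (LinearMap.mem_range_self _ x)
  have he_dense : DenseRange e := by
    rw [DenseRange, Subtype.dense_iff, ← Set.range_comp]
    exact R.topologicalClosure_coe.le
  have he_norm : ∃ C, ∀ x, ‖s x‖ ≤ C * ‖e x‖ := ⟨1, fun x ↦ (one_mul ‖e x‖).symm ▸ h x⟩
  -- `c` extends `t x ↦ s x` from the range of `t` to its closure `K`, and vanishes on `Kᗮ`.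
  refine ⟨(s : E →ₗ[𝕜] G).extendOfNorm e ∘L K.orthogonalProjectionOnto, ?_⟩
  ext x
  have hproj : K.orthogonalProjectionOnto (t x) = e x :=
    K.orthogonalProjectionOnto_mem_subspace_eq_self (e x)
  simp only [comp_apply, hproj, LinearMap.extendOfNorm_eq he_dense he_norm]
  rfl

section Ideal

variable {H : Type*} [NormedAddCommGroup H] [InnerProductSpace ℂ H] [CompleteSpace H]

theorem TwoSidedIdeal.mem_of_nonneg_of_le (I : TwoSidedIdeal (H →L[ℂ] H)) {S T : H →L[ℂ] H}
    (hS : 0 ≤ S) (hST : S ≤ T) (hT : T ∈ I) : S ∈ I := by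
  set s := CFC.sqrt S
  set t := CFC.sqrt T
  have hs : IsSelfAdjoint s := (CFC.sqrt_nonneg S).isSelfAdjoint
  have ht : IsSelfAdjoint t := (CFC.sqrt_nonneg T).isSelfAdjoint
  have hss : s * s = S := CFC.sqrt_mul_sqrt_self S
  have htt : t * t = T := CFC.sqrt_mul_sqrt_self T (hS.trans hST)
  obtain ⟨c, hc⟩ := t.exists_comp_eq_of_norm_apply_le s
    (norm_apply_le_of_star_mul_self_le (by rwa [hs.star_eq, ht.star_eq, hss, htt]))
  have hct : c * t = s := hc
  have htc : t * star c = s := by simpa [ht.star_eq, hs.star_eq] using congrArg star hct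
  have hfactor : S = c * T * star c := by
    rw [← hss, ← htt]
    nth_rewrite 1 [← hct, ← htc]
    simp only [mul_assoc]
  rw [hfactor]
  exact I.mul_mem_right _ _ (I.mul_mem_left _ _ hT)

theorem TwoSidedIdeal.mem_of_sub_le {I : TwoSidedIdeal (H →L[ℂ] H)} {P N X : H →L[ℂ] H}
    (hP : 0 ≤ P) (hNP : N * P = 0) (hle : P - N ≤ X) (hX : X ∈ I) : P ∈ I := by
  set Q := N.ker.starProjection
  have hQ : IsSelfAdjoint Q := isSelfAdjoint_starProjection _
  have hQP : Q * P = P := by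
    ext x
    exact Submodule.starProjection_eq_self_iff.mpr (by simpa using congr($hNP x))
  have hPQ : P * Q = P := by
    simpa [hQ.star_eq, hP.isSelfAdjoint.star_eq] using congrArg star hQP
  have hNQ : N * Q = 0 := by
    ext x
    exact Submodule.starProjection_apply_mem N.ker x
  have hcompress : Q * (P - N) * Q = P := by
    rw [mul_sub, sub_mul, hQP, hPQ, mul_assoc, hNQ, mul_zero, sub_zero]
  have hPle : P ≤ Q * X * Q := hcompress ▸ hQ.conjugate_le_conjugate hle
  exact I.mem_of_nonneg_of_le hP hPle (I.mul_mem_right _ _ (I.mul_mem_left _ _ hX))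

end Ideal

theorem posPart_mem_ideal_iff_general {H : Type*} [NormedAddCommGroup H] [InnerProductSpace ℂ H]
    [CompleteSpace H]
    (I : TwoSidedIdeal (H →L[ℂ] H))
    (A B : H →L[ℂ] H) (hBI : B ∈ I)
    (Ap Am Cp Cm : H →L[ℂ] H)
    (hAp : Ap.IsPositive) (hAm : Am.IsPositive) (hAd : A = Ap - Am) (hAo : Ap ∘L Am = 0)
    (hCp : Cp.IsPositive) (hCm : Cm.IsPositive) (hCd : A + B = Cp - Cm) (hCo : Cp ∘L Cm = 0) :
    (Ap ∈ I ↔ Cp ∈ I) ∧ (Am ∈ I ↔ Cm ∈ I) := by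
  rw [← nonneg_iff_isPositive] at hAp hAm hCp hCm
  have hAo' : Am * Ap = 0 := (hAp.isSelfAdjoint.mul_eq_zero_comm hAm.isSelfAdjoint).mp hAo
  have hCo' : Cm * Cp = 0 := (hCp.isSelfAdjoint.mul_eq_zero_comm hCm.isSelfAdjoint).mp hCo
  refine ⟨⟨fun h ↦ ?_, fun h ↦ ?_⟩, ⟨fun h ↦ ?_, fun h ↦ ?_⟩⟩
  · have hle : Cp - Cm ≤ Ap + B :=
      (by linear_combination (norm := abel) hAd - hCd : Cp - Cm = Ap + B - Am).trans_le
        (sub_le_self _ hAm)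
    exact I.mem_of_sub_le hCp hCo' hle (I.add_mem h hBI)
  · have hle : Ap - Am ≤ Cp - B :=
      (by linear_combination (norm := abel) hCd - hAd : Ap - Am = Cp - B - Cm).trans_le
        (sub_le_self _ hCm)
    exact I.mem_of_sub_le hAp hAo' hle (I.sub_mem h hBI)
  · have hle : Cm - Cp ≤ Am - B :=
      (by linear_combination (norm := abel) hCd - hAd : Cm - Cp = Am - B - Ap).trans_le
        (sub_le_self _ hAp)
    exact I.mem_of_sub_le hCm hCo hle (I.sub_mem h hBI)
  · have hle : Am - Ap ≤ Cm + B :=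
      (by linear_combination (norm := abel) hAd - hCd : Am - Ap = Cm + B - Cp).trans_le
        (sub_le_self _ hCp)
    exact I.mem_of_sub_le hAm hAo hle (I.add_mem h hBI)

/-- Let `I` be a two-sided ideal of `B(H)`, `B = B* ∈ I`, `A = A* ∈ В(H)`.
Then `A₊ ∈ I ↔ (A+B)₊ ∈ I`, and similarly `A₋ ∈ I ↔ (A+B)₋ ∈ I`. The positive and
negative parts are specified by decompositions into positive operators with product zero. -/
theorem posPart_mem_ideal_iff {H : Type*} [NormedAddCommGroup H] [InnerProductSpace ℂ H]
    [CompleteSpace H] [TopologicalSpace.SeparableSpace H]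
    (I : TwoSidedIdeal (H →L[ℂ] H))
    (A B : H →L[ℂ] H) (hA : IsSelfAdjoint A) (hB : IsSelfAdjoint B) (hBI : B ∈ I)
    (Ap Am Cp Cm : H →L[ℂ] H)
    (hAp : Ap.IsPositive) (hAm : Am.IsPositive) (hAd : A = Ap - Am) (hAo : Ap ∘L Am = 0)
    (hCp : Cp.IsPositive) (hCm : Cm.IsPositive) (hCd : A + B = Cp - Cm) (hCo : Cp ∘L Cm = 0) :
    (Ap ∈ I ↔ Cp ∈ I) ∧ (Am ∈ I ↔ Cm ∈ I) :=
  posPart_mem_ideal_iff_general I A B hBI Ap Am Cp Cm hAp hAm hAd hAo hCp hCm hCd hCo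
end

section
/- For every d ∈ ℂ there exists an idempotent D ∈ M₂(ℂ) with operator norm ‖D‖ ≤ 6|d| + 4 whose diagonal entries are 3d − 1 and −3d + 2. -/
open scoped Matrix

/-!
Take the rank-one matrix `D = u wᴴ` with `u = (3d - 1, 3d - 2)` and `w = (1, -1)`. Since
`wᴴ u = 1`, `D` is idempotent, and its diagonal is `(3d - 1, -(3d - 2))`. Its operator norm is
`‖u‖ ‖w‖ = √(2 (|3d - 1|² + |3d - 2|²)) ≤ √(2 ((3|d| + 1)² + (3|d| + 2)²)) ≤ 6|d| + 4`.
-/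

open Matrix InnerProductSpace

theorem Matrix.isIdempotentElem_vecMulVec {n R : Type*} [Fintype n] [Semiring R] {u v : n → R}
    (h : v ⬝ᵥ u = 1) : IsIdempotentElem (vecMulVec u v) := by
  rw [IsIdempotentElem, vecMulVec_mul_vecMulVec, h, one_smul]

section RankOne

variable {𝕜 n : Type*} [RCLike 𝕜] [Fintype n] [DecidableEq n]

theorem Matrix.toEuclideanCLM_vecMulVec (x y : EuclideanSpace 𝕜 n) :
    toEuclideanCLM (𝕜 := 𝕜) (vecMulVec x (star y)) = rankOne 𝕜 x y := by
  rw [← symm_toEuclideanLin_rankOne]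
  ext1 z
  rw [← ContinuousLinearMap.coe_coe, coe_toEuclideanCLM_eq_toEuclideanLin,
    LinearEquiv.apply_symm_apply, ContinuousLinearMap.coe_coe]

theorem Matrix.norm_toEuclideanCLM_vecMulVec (x y : EuclideanSpace 𝕜 n) :
    ‖toEuclideanCLM (𝕜 := 𝕜) (vecMulVec x (star y))‖ = ‖x‖ * ‖y‖ := by
  rw [toEuclideanCLM_vecMulVec, norm_rankOne]

end RankOne

/-- For every `d ∈ ℂ` there is an idempotent `D ∈ M₂(ℂ)` with operator
norm `‖D‖ ≤ 6|d| + 4` whose diagonal entries are `3d − 1` and `−3d + 2`. -/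
theorem exists_two_by_two_idempotent_with_diagonal (d : ℂ) :
    ∃ D : Matrix (Fin 2) (Fin 2) ℂ, D * D = D ∧
      ‖(Matrix.toEuclideanCLM (𝕜 := ℂ) D : EuclideanSpace ℂ (Fin 2) →L[ℂ] EuclideanSpace ℂ (Fin 2))‖
        ≤ 6 * ‖d‖ + 4 ∧
      D 0 0 = 3 * d - 1 ∧ D 1 1 = -3 * d + 2 := by
  set u : EuclideanSpace ℂ (Fin 2) := !₂[3 * d - 1, 3 * d - 2]
  set w : EuclideanSpace ℂ (Fin 2) := !₂[1, -1]
  refine ⟨vecMulVec u (star w), (isIdempotentElem_vecMulVec ?_).eq, ?_, ?_, ?_⟩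
  · norm_num [u, w, dotProduct, Fin.sum_univ_two]
  · have hnorm_sq : (‖u‖ * ‖w‖) ^ 2 = 2 * (‖3 * d - 1‖ ^ 2 + ‖3 * d - 2‖ ^ 2) := by
      simp only [u, w, mul_pow, EuclideanSpace.norm_sq_eq, Fin.sum_univ_two, cons_val_zero,
        cons_val_one, cons_val_fin_one, norm_one, one_pow, norm_neg]
      ring
    have h1 : ‖3 * d - 1‖ ≤ 3 * ‖d‖ + 1 := by simpa using norm_sub_le (3 * d) 1
    have h2 : ‖3 * d - 2‖ ≤ 3 * ‖d‖ + 2 := by simpa using norm_sub_le (3 * d) 2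
    rw [norm_toEuclideanCLM_vecMulVec]
    refine (pow_le_pow_iff_left₀ (by positivity) (by positivity) two_ne_zero).mp ?_
    rw [hnorm_sq]
    nlinarith [norm_nonneg (3 * d - 1), norm_nonneg (3 * d - 2), norm_nonneg d]
  · simp [u, w, vecMulVec_apply]
  · simp only [u, w, vecMulVec_apply, cons_val_one, cons_val_fin_one, Pi.star_apply, star_neg,
      star_one, mul_neg, mul_one]
    ring
end

section
/- If ⟨dⱼ⟩ is an absolutely summable sequence of complex numbers with Σⱼ dⱼ = 1, then there exists a rank-one idempotent operator D on a separable Hilbert space H and an orthonormal basis {eⱼ} such that ⟨D eⱼ, eⱼ⟩ = dⱼ for all j. Conversely, the diagonal of any rank-one idempotent with respect to any orthonormal basis is absolutely summable with sum 1. -/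
/-!
A rank-one operator is `z ↦ ⟪x, z⟫ • y`; it is idempotent exactly when `⟪x, y⟫ = 1`, and its
diagonal in a Hilbert basis `e` is `⟪x, eⱼ⟫ ⟪eⱼ, y⟫`, a product of two square-summable sequences,
hence absolutely summable, with sum `⟪x, y⟫` by Parseval. Conversely, the vectors with coefficients
`conj √dⱼ` and `√dⱼ` are well defined because `‖√dⱼ‖² = ‖dⱼ‖` is summable, and the rank-one
operator they define has diagonal `d` and trace `∑ dⱼ = 1`.
-/

section

open InnerProductSpace

variable {𝕜 E : Type*} [RCLike 𝕜] [NormedAddCommGroup E] [InnerProductSpace 𝕜 E]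

theorem Orthonormal.summable_norm_inner_mul_inner {ι : Type*} {v : ι → E}
    (hv : Orthonormal 𝕜 v) (x y : E) :
    Summable fun i => ‖(inner 𝕜 x (v i) : 𝕜) * inner 𝕜 (v i) y‖ := by
  refine .of_nonneg_of_le (fun _ => norm_nonneg _) (fun i => ?_)
    (((hv.inner_products_summable x).add (hv.inner_products_summable y)).div_const 2)
  rw [norm_mul, ← inner_conj_symm x, RCLike.norm_conj]
  linarith [two_mul_le_add_sq ‖(inner 𝕜 (v i) x : 𝕜)‖ ‖(inner 𝕜 (v i) y : 𝕜)‖]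

theorem isIdempotentElem_rankOne_iff {x y : E} (hx : x ≠ 0) (hy : y ≠ 0) :
    IsIdempotentElem (rankOne 𝕜 x y) ↔ inner 𝕜 y x = (1 : 𝕜) := by
  rw [IsIdempotentElem, ContinuousLinearMap.mul_def, rankOne_comp_rankOne]
  nth_rw 2 [← one_smul 𝕜 (rankOne 𝕜 x y)]
  exact smul_left_inj (rankOne_ne_zero hx hy)

namespace HilbertBasis

variable {ι : Type*} (b : HilbertBasis ι 𝕜 E)

theorem exists_inner_eq {c : ι → 𝕜} (hc : Summable fun i => ‖c i‖ ^ 2) :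
    ∃ v : E, ∀ i, inner 𝕜 (b i) v = c i := by
  have hc₂ : Memℓp c 2 := memℓp_gen (by simpa using hc)
  exact ⟨b.repr.symm ⟨c, hc₂⟩, fun i => by
    rw [← b.repr_apply_apply, LinearIsometryEquiv.apply_symm_apply]⟩

theorem hasSum_inner_rankOne_apply (x y : E) :
    HasSum (fun i => inner 𝕜 (b i) (rankOne 𝕜 y x (b i))) (inner 𝕜 x y) := by
  simpa only [inner_right_rankOne_apply, mul_comm] using b.hasSum_inner_mul_inner x y

theorem summable_norm_inner_rankOne_apply (x y : E) :
    Summable fun i => ‖(inner 𝕜 (b i) (rankOne 𝕜 y x (b i)) : 𝕜)‖ := by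
  simpa only [inner_right_rankOne_apply, mul_comm] using
    b.orthonormal.summable_norm_inner_mul_inner x y

end HilbertBasis

theorem Complex.sq_norm_cpow_inv_two (z : ℂ) : ‖z ^ (2⁻¹ : ℂ)‖ ^ 2 = ‖z‖ := by
  rw [← norm_pow, cpow_ofNat_inv_pow]

theorem HilbertBasis.exists_rankOne_diagonal_eq {ι H : Type*} [NormedAddCommGroup H]
    [InnerProductSpace ℂ H] (b : HilbertBasis ι ℂ H) {d : ι → ℂ} (hd : Summable fun i => ‖d i‖) :
    ∃ x y : H, ∀ i, inner ℂ (b i) (rankOne ℂ y x (b i)) = d i := by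
  set s : ι → ℂ := fun i => d i ^ (2⁻¹ : ℂ)
  obtain ⟨x, hx⟩ := b.exists_inner_eq (c := fun i => starRingEnd ℂ (s i))
    (by simpa [RCLike.norm_conj, s, Complex.sq_norm_cpow_inv_two] using hd)
  obtain ⟨y, hy⟩ := b.exists_inner_eq (c := s)
    (by simpa [s, Complex.sq_norm_cpow_inv_two] using hd)
  refine ⟨x, y, fun i => ?_⟩
  rw [inner_right_rankOne_apply, hy, ← inner_conj_symm, hx, Complex.conj_conj, ← sq,
    Complex.cpow_ofNat_inv_pow]

end

/-- An absolutely summable sequence `⟨d j⟩` with `Σ d j = 1` is the diagonal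
of a rank-one idempotent in some orthonormal basis of a separable infinite-dimensional
Hilbert space; conversely, the diagonal of any rank-one idempotent in any orthonormal
basis is absolutely summable with sum `1`. -/
theorem rankOne_idempotent_diagonal {H : Type*} [NormedAddCommGroup H] [InnerProductSpace ℂ H]
    [CompleteSpace H] (e₀ : HilbertBasis ℕ ℂ H)
    (d : ℕ → ℂ) (hd : Summable fun j => ‖d j‖) :
    ((∑' j, d j) = 1 →
      ∃ (D : H →L[ℂ] H) (x y : H), x ≠ 0 ∧ y ≠ 0 ∧ (∀ z, D z = (inner ℂ x z : ℂ) • y) ∧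
        D ∘L D = D ∧ ∃ e : HilbertBasis ℕ ℂ H, ∀ j, (inner ℂ (e j) (D (e j)) : ℂ) = d j) ∧
    (∀ (D : H →L[ℂ] H) (x y : H), x ≠ 0 → y ≠ 0 → (∀ z, D z = (inner ℂ x z : ℂ) • y) →
      D ∘L D = D → ∀ e : HilbertBasis ℕ ℂ H,
        (Summable fun j => ‖(inner ℂ (e j) (D (e j)) : ℂ)‖) ∧
        (∑' j, (inner ℂ (e j) (D (e j)) : ℂ)) = 1) := by
  refine ⟨fun hsum => ?_, fun D x y hx hy hD hD2 e => ?_⟩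
  · obtain ⟨x, y, hdiag⟩ := e₀.exists_rankOne_diagonal_eq hd
    have htrace : HasSum d (inner ℂ x y) := by
      simpa only [hdiag] using e₀.hasSum_inner_rankOne_apply x y
    have hxy : inner ℂ x y = (1 : ℂ) := by rw [← hsum, htrace.tsum_eq]
    have hx : x ≠ 0 := by rintro rfl; simp at hxy
    have hy : y ≠ 0 := by rintro rfl; simp at hxy
    exact ⟨InnerProductSpace.rankOne ℂ y x, x, y, hx, hy, fun _ => rfl,
      (isIdempotentElem_rankOne_iff hy hx).2 hxy, e₀, hdiag⟩
  · obtain rfl : D = InnerProductSpace.rankOne ℂ y x := ContinuousLinearMap.ext hD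
    have hxy := (isIdempotentElem_rankOne_iff hy hx).1 hD2
    exact ⟨e.summable_norm_inner_rankOne_apply x y,
      hxy ▸ (e.hasSum_inner_rankOne_apply x y).tsum_eq⟩
end

section
/- A finite sequence ⟨d₁,…,dₙ⟩ ∈ ℂⁿ is the diagonal of some idempotent matrix D ∈ Mₙ(ℂ) if and only if: all dₖ = 0, or all dₖ = 1, or Σₖ dₖ ∈ {1, 2, …, n−1}. -/
/-!
An idempotent is a projection onto its range, so its trace is its rank; rank `0` forces
`D = 0`, and rank `n` forces `1 - D = 0` because `1 - D` is an idempotent of trace `0`.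

Conversely, if `∑ dₖ = m` with `0 < m < n`, split the indices into `m` and `n - m` and look for
`D = U * V` with `U = [1; J]`, `V = [1 - Z * J, Z]` and `J` the all-ones matrix. Then `V * U = 1`,
so `D` is idempotent; its diagonal consists of the numbers `1 - (row sums of Z)` followed by the
column sums of `Z`. A matrix `Z` with the required row and column sums exists because both
prescriptions have the same total `m - ∑ₖ₌₁ᵐ dₖ`.
-/

namespace Matrix

theorem exists_row_sums_col_sums {ι κ R : Type*} [Fintype ι] [Fintype κ] [DecidableEq ι]
    [DecidableEq κ] [AddCommGroup R] (r : ι → R) (c : κ → R) (h : ∑ i, r i = ∑ j, c j)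
    (i₀ : ι) (j₀ : κ) :
    ∃ Z : Matrix ι κ R, (∀ i, ∑ j, Z i j = r i) ∧ ∀ j, ∑ i, Z i j = c j := by
  refine ⟨of fun i j => (if j = j₀ then r i else 0) + (if i = i₀ then c j else 0) -
    (if i = i₀ ∧ j = j₀ then ∑ i, r i else 0), fun i => ?_, fun j => ?_⟩
  · by_cases hi : i = i₀ <;> simp [Finset.sum_add_distrib, Finset.sum_sub_distrib, hi, h]
  · by_cases hj : j = j₀ <;> simp [Finset.sum_add_distrib, Finset.sum_sub_distrib, hj]

theorem isIdempotentElem_mul_of_mul_eq_one {m n R : Type*} [Fintype m] [Fintype n]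
    [DecidableEq n] [Semiring R] {U : Matrix m n R} {V : Matrix n m R} (h : V * U = 1) :
    IsIdempotentElem (U * V) := by
  rw [IsIdempotentElem, Matrix.mul_assoc, ← Matrix.mul_assoc V, h, Matrix.one_mul]

theorem exists_isIdempotentElem_diag_eq_of_sum_eq_card {ι κ R : Type*} [Fintype ι]
    [Fintype κ] [DecidableEq ι] [DecidableEq κ] [Ring R] [Nonempty ι] [Nonempty κ]
    (d : ι ⊕ κ → R) (h : ∑ x, d x = Fintype.card ι) :
    ∃ D : Matrix (ι ⊕ κ) (ι ⊕ κ) R, IsIdempotentElem D ∧ D.diag = d := by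
  obtain ⟨i₀⟩ := ‹Nonempty ι›
  obtain ⟨j₀⟩ := ‹Nonempty κ›
  have hsum : ∑ i, (1 - d (.inl i)) = ∑ j, d (.inr j) := by
    rw [Fintype.sum_sum_type] at h
    simp [Finset.sum_sub_distrib, ← h]
  obtain ⟨Z, hrow, hcol⟩ := exists_row_sums_col_sums _ _ hsum i₀ j₀
  let J : Matrix κ ι R := of fun _ _ => 1
  refine ⟨fromRows 1 J * fromCols (1 - Z * J) Z, isIdempotentElem_mul_of_mul_eq_one ?_, ?_⟩
  · simp [fromCols_mul_fromRows]
  · ext (i | j) <;> simp [mul_apply, J, hrow, hcol]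

variable {n K : Type*} [Fintype n] [DecidableEq n] [Field K]

theorem isIdempotentElem_toLin' {D : Matrix n n K} (hD : IsIdempotentElem D) :
    IsIdempotentElem D.toLin' :=
  hD.map toLinAlgEquiv'

theorem trace_eq_rank_of_isIdempotentElem {D : Matrix n n K} (hD : IsIdempotentElem D) :
    D.trace = D.rank := by
  rw [← trace_toLin'_eq,
    (LinearMap.IsIdempotentElem.isProj_range _ (isIdempotentElem_toLin' hD)).trace]
  rfl

theorem eq_zero_of_isIdempotentElem_of_trace_eq_zero [CharZero K] {D : Matrix n n K}
    (hD : IsIdempotentElem D) (htr : D.trace = 0) : D = 0 := by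
  rw [← trace_toLin'_eq] at htr
  exact toLin'.injective <| by
    simpa using LinearMap.IsIdempotentElem.eq_zero_of_trace_eq_zero (isIdempotentElem_toLin' hD) htr

theorem eq_one_of_isIdempotentElem_of_trace_eq_card [CharZero K] {D : Matrix n n K}
    (hD : IsIdempotentElem D) (htr : D.trace = Fintype.card n) : D = 1 := by
  have h := eq_zero_of_isIdempotentElem_of_trace_eq_zero hD.one_sub (by simp [trace_sub, htr])
  exact (sub_eq_zero.mp h).symm

end Matrix

open Matrix

/-- `⟨d₁,…,dₙ⟩ ∈ ℂⁿ` is the diagonal of some idempotent matrix in `Mₙ(ℂ)`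
iff all entries are `0`, or all are `1`, or the sum is an integer in `{1,…,n−1}`. -/
theorem idempotent_matrix_diagonal_iff {n : ℕ} (d : Fin n → ℂ) :
    (∃ D : Matrix (Fin n) (Fin n) ℂ, D * D = D ∧ ∀ k, D k k = d k) ↔
      ((∀ k, d k = 0) ∨ (∀ k, d k = 1) ∨
        ∃ m : ℕ, 1 ≤ m ∧ m ≤ n - 1 ∧ ∑ k, d k = (m : ℂ)) := by
  constructor
  · rintro ⟨D, hD, hdiag⟩
    have htr : D.trace = ∑ k, d k := Finset.sum_congr rfl fun k _ => hdiag k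
    have hrank : D.trace = D.rank := trace_eq_rank_of_isIdempotentElem hD
    obtain h0 | hpos := D.rank.eq_zero_or_pos
    · have hD0 := eq_zero_of_isIdempotentElem_of_trace_eq_zero hD
        (by rw [hrank, h0, Nat.cast_zero])
      exact Or.inl fun k => by rw [← hdiag, hD0, Matrix.zero_apply]
    obtain hlt | hn := D.rank_le_width.lt_or_eq
    · exact Or.inr <| Or.inr ⟨D.rank, hpos, by omega, by rw [← htr, hrank]⟩
    · have hD1 := eq_one_of_isIdempotentElem_of_trace_eq_card hD
        (by rw [hrank, hn, Fintype.card_fin])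
      exact Or.inr <| Or.inl fun k => by rw [← hdiag, hD1, one_apply_eq]
  · rintro (h0 | h1 | ⟨m, hm, hmn, hsum⟩)
    · exact ⟨0, by simp, fun k => (h0 k).symm⟩
    · exact ⟨1, by simp, fun k => by rw [one_apply_eq, h1]⟩
    obtain ⟨p, rfl⟩ : ∃ p, n = m + p := ⟨n - m, by omega⟩
    have : Nonempty (Fin m) := Fin.pos_iff_nonempty.mp hm
    have : Nonempty (Fin p) := Fin.pos_iff_nonempty.mp (by omega)
    let e : Fin m ⊕ Fin p ≃ Fin (m + p) := finSumFinEquiv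
    obtain ⟨D, hD, hdiag⟩ := exists_isIdempotentElem_diag_eq_of_sum_eq_card (d ∘ e)
      (by rw [Function.comp_def, Equiv.sum_comp e d, hsum, Fintype.card_fin])
    refine ⟨reindex e e D, hD.map (reindexAlgEquiv ℂ ℂ e), fun k => ?_⟩
    simpa using congrFun hdiag (e.symm k)
end

section
/- Let A ∈ M₂(ℂ) have diagonal entries d₁, d₂ with respect to an orthonormal basis {e₁, e₂}, and let d = λ d₁ + (1−λ) d₂ with 0 ≤ λ ≤ 1. Then there exists an orthonormal basis {b, f} of ℂ² such that ⟨A f, f⟩ = d, ⟨A b, b⟩ = d₁ + d₂ − d, and |⟨e₁, f⟩|² ≤ λ. -/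
/-!
Look for `f = r e₀ + s ω e₁` and `b = s e₀ - r ω e₁` with `r, s` real, `r² + s² = 1` and
`|ω| = 1`; these form an orthonormal basis, and with `δ = d₁ - d₂` and `p, q` the off-diagonal
entries of `A`, the condition `⟨A f, f⟩ = d` reads `(r² - λ) δ + r s (ω p + ω̄ q) = 0`, which
then also gives `⟨A b, b⟩ = d₁ + d₂ - d`. If `δ ≠ 0`, choose the phase `ω` with
`ω p + ω̄ q = κ δ` for some `κ ≥ 0`; the intermediate value theorem yields `r ∈ [0, 1]` with
`r² + r s κ = λ`, so that `|⟨e₁, f⟩|² = r² ≤ λ`.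
-/

open Complex Set
open scoped InnerProductSpace ComplexConjugate

theorem exists_norm_eq_one_mul_add_conj_mul_eq_nonneg_mul (u w δ : ℂ) (hδ : δ ≠ 0) :
    ∃ ω : ℂ, ‖ω‖ = 1 ∧ ∃ κ : ℝ, 0 ≤ κ ∧ ω * u + conj ω * w = κ * δ := by
  set z := u / δ - conj (w / δ)
  set ω₀ := exp (↑(-arg z) * I)
  have hω₀ : ‖ω₀‖ = 1 := norm_exp_ofReal_mul_I _
  have hω₀z : ω₀ * z = ‖z‖ := by
    conv_lhs => rw [← norm_mul_exp_arg_mul_I z]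
    rw [mul_left_comm, ← exp_add]; push_cast; simp
  set y := ω₀ * conj (w / δ)
  -- `(ω₀ u + ω̄₀ w) / δ = ω₀ z + (y + ȳ)`, and `ω₀` rotates `z` onto the nonnegative reals.
  have key : ω₀ * u + conj ω₀ * w = ↑(‖z‖ + 2 * y.re) * δ := by
    rw [ofReal_add, ← add_conj, ← hω₀z]
    simp only [z, y, map_mul, Complex.conj_conj]
    field_simp
    ring
  rcases le_total 0 (‖z‖ + 2 * y.re) with h | h
  · exact ⟨ω₀, hω₀, _, h, key⟩
  · refine ⟨-ω₀, by rw [norm_neg, hω₀], _, neg_nonneg.mpr h, ?_⟩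
    rw [map_neg, ofReal_neg]
    linear_combination -key

theorem exists_sq_add_mul_sqrt_one_sub_sq_eq (κ : ℝ) {lam : ℝ} (h0 : 0 ≤ lam) (h1 : lam ≤ 1) :
    ∃ r ∈ Icc (0 : ℝ) 1, r ^ 2 + r * √(1 - r ^ 2) * κ = lam := by
  have hcont : ContinuousOn (fun r : ℝ => r ^ 2 + r * √(1 - r ^ 2) * κ) (Icc 0 1) := by
    fun_prop
  exact intermediate_value_Icc zero_le_one hcont ⟨by simpa, by simpa⟩

theorem exists_rotation_parameters (p q δ : ℂ) {lam : ℝ} (h0 : 0 ≤ lam) (h1 : lam ≤ 1) :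
    ∃ r s : ℝ, ∃ ω : ℂ, r ^ 2 + s ^ 2 = 1 ∧ ‖ω‖ = 1 ∧ r ^ 2 ≤ lam ∧
      ((r : ℂ) ^ 2 - lam) * δ + r * s * (ω * p + conj ω * q) = 0 := by
  rcases eq_or_ne δ 0 with rfl | hδ
  · exact ⟨0, 1, 1, by norm_num, by simp, by simpa using h0, by simp⟩
  obtain ⟨ω, hω, κ, hκ, hωκ⟩ := exists_norm_eq_one_mul_add_conj_mul_eq_nonneg_mul p q δ hδ
  obtain ⟨r, ⟨hr0, hr1⟩, hr⟩ := exists_sq_add_mul_sqrt_one_sub_sq_eq κ h0 h1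
  refine ⟨r, √(1 - r ^ 2), ω, ?_, hω, ?_, ?_⟩
  · rw [Real.sq_sqrt (by nlinarith)]; ring
  · have := mul_nonneg (mul_nonneg hr0 (Real.sqrt_nonneg (1 - r ^ 2))) hκ
    linarith
  · rw [hωκ, ← hr]; push_cast; ring

theorem conj_mul_self_of_norm_eq_one {ω : ℂ} (hω : ‖ω‖ = 1) : conj ω * ω = 1 := by
  rw [conj_mul', hω]; simp

theorem exists_orthonormalBasis_coe_eq {𝕜 E ι : Type*} [RCLike 𝕜] [NormedAddCommGroup E]
    [InnerProductSpace 𝕜 E] [Fintype ι] (e : OrthonormalBasis ι 𝕜 E) {v : ι → E}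
    (hv : Orthonormal 𝕜 v) : ∃ w : OrthonormalBasis ι 𝕜 E, ⇑w = v := by
  have : FiniteDimensional 𝕜 E := .of_basis e.toBasis
  have hsp := hv.linearIndependent.span_eq_top_of_card_eq_finrank'
    (Module.finrank_eq_card_basis e.toBasis).symm
  exact ⟨.mk hv hsp.ge, OrthonormalBasis.coe_mk hv hsp.ge⟩

section
variable {E : Type*} [NormedAddCommGroup E] [InnerProductSpace ℂ E]

theorem inner_smul_add_smul_map (A : E →L[ℂ] E) (x y : E) (a c : ℂ) :
    ⟪a • x + c • y, A (a • x + c • y)⟫_ℂ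
      = conj a * a * ⟪x, A x⟫_ℂ + conj a * c * ⟪x, A y⟫_ℂ + conj c * a * ⟪y, A x⟫_ℂ
        + conj c * c * ⟪y, A y⟫_ℂ := by
  simp only [map_add, map_smul, inner_add_left, inner_add_right, inner_smul_left,
    inner_smul_right]
  ring

namespace OrthonormalBasis

variable (e : OrthonormalBasis (Fin 2) ℂ E)

theorem inner_smul_add_smul (a c a' c' : ℂ) :
    ⟪a • e 0 + c • e 1, a' • e 0 + c' • e 1⟫_ℂ = conj a * a' + conj c * c' := by
  have he := orthonormal_iff_ite.mp e.orthonormal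
  simp only [inner_add_left, inner_add_right, inner_smul_left, inner_smul_right, he]
  simp [mul_comm]

noncomputable def rotatedFamily (r s : ℝ) (ω : ℂ) : Fin 2 → E :=
  ![(s : ℂ) • e 0 + (-(r * ω)) • e 1, (r : ℂ) • e 0 + (s * ω) • e 1]

variable {e} {r s : ℝ} {ω : ℂ}

@[simp] theorem rotatedFamily_zero :
    e.rotatedFamily r s ω 0 = (s : ℂ) • e 0 + (-(r * ω)) • e 1 := rfl

@[simp] theorem rotatedFamily_one :
    e.rotatedFamily r s ω 1 = (r : ℂ) • e 0 + (s * ω) • e 1 := rfl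

theorem orthonormal_rotatedFamily (hrs : r ^ 2 + s ^ 2 = 1) (hω : ‖ω‖ = 1) :
    Orthonormal ℂ (e.rotatedFamily r s ω) := by
  have hω' := conj_mul_self_of_norm_eq_one hω
  have hrs' : (r : ℂ) ^ 2 + (s : ℂ) ^ 2 = 1 := by exact_mod_cast hrs
  rw [orthonormal_iff_ite]
  intro i j
  fin_cases i <;> fin_cases j <;>
    simp only [Fin.zero_eta, Fin.mk_one, rotatedFamily_zero, rotatedFamily_one,
      inner_smul_add_smul, map_neg, map_mul, conj_ofReal] <;> norm_num
  · linear_combination hrs' + (r : ℂ) ^ 2 * hω'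
  · linear_combination -(r * s : ℂ) * hω'
  · linear_combination -(r * s : ℂ) * hω'
  · linear_combination hrs' + (s : ℂ) ^ 2 * hω'

theorem inner_rotatedFamily_one_map (A : E →L[ℂ] E) (hω : ‖ω‖ = 1) :
    ⟪e.rotatedFamily r s ω 1, A (e.rotatedFamily r s ω 1)⟫_ℂ
      = r ^ 2 * ⟪e 0, A (e 0)⟫_ℂ + s ^ 2 * ⟪e 1, A (e 1)⟫_ℂ
        + r * s * (ω * ⟪e 0, A (e 1)⟫_ℂ + conj ω * ⟪e 1, A (e 0)⟫_ℂ) := by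
  rw [rotatedFamily_one, inner_smul_add_smul_map]
  simp only [map_mul, conj_ofReal]
  linear_combination (s ^ 2 * ⟪e 1, A (e 1)⟫_ℂ) * conj_mul_self_of_norm_eq_one hω

theorem inner_rotatedFamily_zero_map (A : E →L[ℂ] E) (hω : ‖ω‖ = 1) :
    ⟪e.rotatedFamily r s ω 0, A (e.rotatedFamily r s ω 0)⟫_ℂ
      = s ^ 2 * ⟪e 0, A (e 0)⟫_ℂ + r ^ 2 * ⟪e 1, A (e 1)⟫_ℂ
        - r * s * (ω * ⟪e 0, A (e 1)⟫_ℂ + conj ω * ⟪e 1, A (e 0)⟫_ℂ) := by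
  rw [rotatedFamily_zero, inner_smul_add_smul_map]
  simp only [map_neg, map_mul, conj_ofReal]
  linear_combination (r ^ 2 * ⟪e 1, A (e 1)⟫_ℂ) * conj_mul_self_of_norm_eq_one hω

theorem inner_zero_rotatedFamily_one : ⟪e 0, e.rotatedFamily r s ω 1⟫_ℂ = r := by
  simp

end OrthonormalBasis

end

/-- Fan's quantitative Toeplitz–Hausdorff lemma in dimension 2:
If `A` has diagonal `d₁, d₂` in the orthonormal basis `{e 0, e 1}` and
`d = λ d₁ + (1−λ) d₂` with `0 ≤ λ ≤ 1`, then there is an orthonormal basis `{b, f}`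
(`b = v 0`, `f = v 1`) with `⟨A f, f⟩ = d`, `⟨A b, b⟩ = d₁ + d₂ − d`, `|⟨e₁, f⟩|² ≤ λ`. -/
theorem fan_quantitative_toeplitz_hausdorff
    (A : EuclideanSpace ℂ (Fin 2) →L[ℂ] EuclideanSpace ℂ (Fin 2))
    (e : OrthonormalBasis (Fin 2) ℂ (EuclideanSpace ℂ (Fin 2)))
    (lam : ℝ) (hlam0 : 0 ≤ lam) (hlam1 : lam ≤ 1) (d : ℂ)
    (hd : d = (lam : ℂ) * (inner ℂ (e 0) (A (e 0)) : ℂ)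
      + (1 - (lam : ℂ)) * (inner ℂ (e 1) (A (e 1)) : ℂ)) :
    ∃ v : OrthonormalBasis (Fin 2) ℂ (EuclideanSpace ℂ (Fin 2)),
      (inner ℂ (v 1) (A (v 1)) : ℂ) = d ∧
      (inner ℂ (v 0) (A (v 0)) : ℂ)
        = (inner ℂ (e 0) (A (e 0)) : ℂ) + (inner ℂ (e 1) (A (e 1)) : ℂ) - d ∧
      ‖(inner ℂ (e 0) (v 1) : ℂ)‖ ^ 2 ≤ lam := by
  obtain ⟨r, s, ω, hrs, hω, hr, hrsω⟩ := exists_rotation_parameters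
    ⟪e 0, A (e 1)⟫_ℂ ⟪e 1, A (e 0)⟫_ℂ (⟪e 0, A (e 0)⟫_ℂ - ⟪e 1, A (e 1)⟫_ℂ) hlam0 hlam1
  obtain ⟨v, hv⟩ := exists_orthonormalBasis_coe_eq e (e.orthonormal_rotatedFamily hrs hω)
  have hrs' : (r : ℂ) ^ 2 + (s : ℂ) ^ 2 = 1 := by exact_mod_cast hrs
  refine ⟨v, ?_, ?_, ?_⟩ <;> rw [hv]
  · rw [e.inner_rotatedFamily_one_map A hω, hd]
    linear_combination hrsω + ⟪e 1, A (e 1)⟫_ℂ * hrs'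
  · rw [e.inner_rotatedFamily_zero_map A hω, hd]
    linear_combination -hrsω + ⟪e 0, A (e 0)⟫_ℂ * hrs'
  · rwa [e.inner_zero_rotatedFamily_one, norm_real, Real.norm_eq_abs, sq_abs]
end

section
/- An absolutely summable sequence ⟨dₙ⟩ ∈ ℓ¹ of complex numbers is the diagonal, with respect to some orthonormal basis, of a nonzero finite-rank idempotent operator on a separable infinite-dimensional Hilbert space if and only if Σₙ dₙ is a positive integer. -/
/-!
A finite-rank idempotent `D` is `∑ i, rankOne (b i) (v i)`, where `b` is a basis of its range and
`v i` represents the `i`-th coordinate functional of `D`; then `⟪v i, b j⟫ = δᵢⱼ`, so the diagonal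
of `D` in any orthonormal basis sums to `∑ i, ⟪v i, b i⟫ = rank D`.

Conversely every biorthogonal family `(u i, v i)` gives the idempotent `∑ i, rankOne (u i) (v i)`,
whose diagonal in the basis `e` is `∑ i, ⟪v i, e n⟫ * ⟪e n, u i⟫`, so it suffices to realise `d`
in this form. A single pair realises any `d` of sum one (factor `d n = √‖d n‖ * (d n / √‖d n‖)`).
For sum `m + 1`, a new pair takes over `d` at two reserved coordinates `p`, `q`, where no other
pair lives, and picks up the rest `1 - d p - d q` of its trace at two coordinates `p'`, `q'` with
small `d`, where only one old pair lives. There it is chosen orthogonal to that pair, which makes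
its diagonal there the swapped diagonal of the old pair times a scalar `c`; the resulting `2 × 2`
system is solvable, and what is left of `d` has sum `m`.
-/

open Filter Topology InnerProductSpace ContinuousLinearMap
open scoped ComplexConjugate InnerProductSpace

section

variable {𝕜 E : Type*} [RCLike 𝕜] [NormedAddCommGroup E] [InnerProductSpace 𝕜 E]

section Biorthogonal

variable (𝕜) in
def IsBiorthogonal {ι : Type*} [DecidableEq ι] (u v : ι → E) : Prop :=
  ∀ i j, ⟪v i, u j⟫_𝕜 = if i = j then 1 else 0

variable {ι : Type*} [Fintype ι] {u v : ι → E}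

theorem inner_sum_rankOne_apply (x y : E) :
    ⟪x, (∑ i, rankOne 𝕜 (u i) (v i)) y⟫_𝕜 = ∑ i, ⟪v i, y⟫_𝕜 * ⟪x, u i⟫_𝕜 := by
  simp [sum_apply, inner_sum, inner_smul_right]

theorem finiteDimensional_range_sum_rankOne :
    FiniteDimensional 𝕜 (LinearMap.range (∑ i, rankOne 𝕜 (u i) (v i)).toLinearMap) := by
  have := FiniteDimensional.span_of_finite 𝕜 (Set.finite_range u)
  refine Submodule.finiteDimensional_of_le (S₂ := Submodule.span 𝕜 (Set.range u)) ?_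
  rintro _ ⟨x, rfl⟩
  simpa using Submodule.sum_mem _ fun i _ =>
    Submodule.smul_mem _ _ (Submodule.subset_span (Set.mem_range_self i))

namespace IsBiorthogonal

variable [DecidableEq ι]

theorem isIdempotentElem (h : IsBiorthogonal 𝕜 u v) :
    IsIdempotentElem (∑ i, rankOne 𝕜 (u i) (v i)) := by
  simp [IsIdempotentElem, mul_def, finsetSum_comp, comp_finsetSum, rankOne_comp_rankOne, h _ _]

theorem sum_rankOne_ne_zero [Nonempty ι] (h : IsBiorthogonal 𝕜 u v) :
    ∑ i, rankOne 𝕜 (u i) (v i) ≠ 0 := by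
  obtain ⟨i⟩ := ‹Nonempty ι›
  intro h0
  have := congr(⟪v i, $h0 (u i)⟫_𝕜)
  simp [h _ _] at this

theorem hasSum_inner_sum_rankOne_apply {κ : Type*} (h : IsBiorthogonal 𝕜 u v)
    (e : HilbertBasis κ 𝕜 E) :
    HasSum (fun n => ⟪e n, (∑ i, rankOne 𝕜 (u i) (v i)) (e n)⟫_𝕜) (Fintype.card ι) := by
  simp only [inner_sum_rankOne_apply]
  simpa [h _ _] using hasSum_sum (s := .univ) fun i _ => e.hasSum_inner_mul_inner (v i) (u i)

theorem cons {k : ℕ} {u v : Fin k → E} {u₀ v₀ : E} (h : IsBiorthogonal 𝕜 u v)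
    (h₀ : ⟪v₀, u₀⟫_𝕜 = 1) (hu₀ : ∀ i, ⟪v i, u₀⟫_𝕜 = 0) (hv₀ : ∀ j, ⟪v₀, u j⟫_𝕜 = 0) :
    IsBiorthogonal 𝕜 (Fin.cons u₀ u : Fin (k + 1) → E) (Fin.cons v₀ v) := by
  intro i j
  cases i using Fin.cases <;> cases j using Fin.cases <;>
    simp [*, h _ _, eq_comm (a := (0 : Fin _))]

end IsBiorthogonal

theorem exists_isBiorthogonal_eq_sum_rankOne [CompleteSpace E] {D : E →L[𝕜] E}
    (hD : IsIdempotentElem D) [FiniteDimensional 𝕜 (LinearMap.range D.toLinearMap)] :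
    ∃ (k : ℕ) (u v : Fin k → E), IsBiorthogonal 𝕜 u v ∧ D = ∑ i, rankOne 𝕜 (u i) (v i) := by
  set R := LinearMap.range D.toLinearMap
  let b := Module.finBasis 𝕜 R
  let D' := D.codRestrict R (LinearMap.mem_range_self _)
  let φ : Fin _ → StrongDual 𝕜 E := fun i => LinearMap.toContinuousLinearMap (b.coord i) ∘L D'
  have hD'b : ∀ j, D' (b j) = b j := by
    intro j
    obtain ⟨x, hx⟩ := (b j).2
    exact Subtype.ext (hx ▸ congr($hD x))
  refine ⟨_, fun i => b i, fun i => (toDual 𝕜 E).symm (φ i), fun i j => ?_, ?_⟩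
  · simp [toDual_symm_apply, φ, hD'b, Finsupp.single_apply, eq_comm]
  · ext x
    have := congr(Subtype.val $(b.sum_repr (D' x)))
    rw [Submodule.coe_sum] at this
    simpa [φ, toDual_symm_apply, D'] using this.symm

end Biorthogonal

theorem exists_transfer_scalars {K : Type*} [Field K] {a b y : K} (h₁ : a + b ≠ y)
    (h₂ : a + b ≠ 2 * y) : ∃ c s t : K, s + t = y ∧ s = c * (b - t) ∧ t = c * (a - s) := by
  -- adding the last two equations gives `y = c * (a + b - y)`
  have h₁' : a + b - y ≠ 0 := sub_ne_zero.2 h₁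
  have h₂' : a + b - y - y ≠ 0 := fun h => h₂ (by linear_combination h)
  refine ⟨y / (a + b - y), y * (b - y) / (a + b - y - y), y * (a - y) / (a + b - y - y),
    ?_, ?_, ?_⟩ <;> field_simp <;> ring

theorem exists_transfer_indices {κ : Type*} [Infinite κ] {d : κ → 𝕜}
    (hd : Tendsto d cofinite (𝓝 0)) (y : 𝕜) {W : Set κ} (hW : W.Finite) :
    ∃ p ∉ W, ∃ q ∉ W, p ≠ q ∧ ∃ c s t : 𝕜, s + t = y ∧ s = c * (d q - t) ∧ t = c * (d p - s) := by
  rcases eq_or_ne y 0 with rfl | hy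
  · obtain ⟨p, hp, q, hq, hpq⟩ := hW.infinite_compl.nontrivial
    exact ⟨p, hp, q, hq, hpq, 0, 0, 0, by simp⟩
  have hsmall : {n | ‖y‖ / 2 ≤ ‖d n‖}.Finite := by
    have := hd.eventually (Metric.ball_mem_nhds 0 (half_pos (norm_pos_iff.2 hy)))
    simpa [Filter.eventually_cofinite] using this
  obtain ⟨p, hp, q, hq, hpq⟩ := (hW.union hsmall).infinite_compl.nontrivial
  simp only [Set.compl_union, Set.mem_inter_iff, Set.mem_compl_iff, Set.mem_ofPred_eq, not_le]
    at hp hq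
  have hpq_small : ‖d p + d q‖ < ‖y‖ := (norm_add_le _ _).trans_lt (by linarith [hp.2, hq.2])
  obtain ⟨c, s, t, h⟩ := exists_transfer_scalars (a := d p) (b := d q) (y := y)
    (fun h => by rw [h] at hpq_small; exact lt_irrefl _ hpq_small)
    (fun h => by rw [h, norm_mul, RCLike.norm_two] at hpq_small; linarith [norm_nonneg y])
  exact ⟨p, hp.1, q, hq.1, hpq, c, s, t, h⟩

theorem HilbertBasis.exists_inner_mul_inner_eq {κ : Type*} (e : HilbertBasis κ 𝕜 E) {d : κ → 𝕜}
    (hd : Summable d) : ∃ u v : E, ∀ n,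
      ⟪v, e n⟫_𝕜 * ⟪e n, u⟫_𝕜 = d n ∧ (d n = 0 → ⟪e n, u⟫_𝕜 = 0 ∧ ⟪v, e n⟫_𝕜 = 0) := by
  set a : κ → 𝕜 := fun n => (√‖d n‖ : ℝ)
  have memℓp_of_norm_sq {f : κ → 𝕜} (hf : ∀ n, ‖f n‖ ^ 2 = ‖d n‖) : Memℓp f 2 :=
    memℓp_gen (by simpa [hf] using summable_norm_iff.2 hd)
  have ha : Memℓp a 2 := memℓp_of_norm_sq fun n => by simp [a]
  have hb : Memℓp (fun n => d n / a n) 2 := memℓp_of_norm_sq fun n => by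
    rcases eq_or_ne (d n) 0 with h | h
    · simp [h]
    · simp [a, div_pow]
      field_simp
  refine ⟨e.repr.symm ⟨_, hb⟩, e.repr.symm ⟨a, ha⟩, fun n => ?_⟩
  rw [← inner_conj_symm]
  simp only [← e.repr_apply_apply, LinearIsometryEquiv.apply_symm_apply]
  rcases eq_or_ne (d n) 0 with h | h
  · simp [a, h]
  · simp only [a, RCLike.conj_ofReal]
    exact ⟨mul_div_cancel₀ (d n) (by simpa using h), fun h' => absurd h' h⟩

section DiagonalFamily

variable {κ : Type*} (e : HilbertBasis κ 𝕜 E)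

/-- At the slots `p`, `q` only the pair `0` lives: the next pair of the induction is attached to
it there. -/
structure IsDiagonalFamily (d : κ → 𝕜) (Z : Set κ) (p q : κ) {k : ℕ} (u v : Fin (k + 1) → E) :
    Prop where
  isBiorthogonal : IsBiorthogonal 𝕜 u v
  diag_eq n : ∑ i, ⟪v i, e n⟫_𝕜 * ⟪e n, u i⟫_𝕜 = d n
  vanish i : ∀ n ∈ Z, ⟪e n, u i⟫_𝕜 = 0 ∧ ⟪v i, e n⟫_𝕜 = 0
  vanish_slots i : i ≠ 0 → ∀ n ∈ ({p, q} : Set κ), ⟪e n, u i⟫_𝕜 = 0 ∧ ⟪v i, e n⟫_𝕜 = 0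

variable {e}

theorem IsDiagonalFamily.diag_eq_slot {d : κ → 𝕜} {Z : Set κ} {p q : κ} {k : ℕ}
    {u v : Fin (k + 1) → E} (h : IsDiagonalFamily e d Z p q u v) {n : κ}
    (hn : n ∈ ({p, q} : Set κ)) : ⟪v 0, e n⟫_𝕜 * ⟪e n, u 0⟫_𝕜 = d n := by
  rw [← h.diag_eq n, Fin.sum_univ_succ, left_eq_add]
  exact Finset.sum_eq_zero fun i _ => by
    rw [(h.vanish_slots _ (Fin.succ_ne_zero i) n hn).1, mul_zero]

theorem exists_isDiagonalFamily_zero {d : κ → 𝕜} {Z : Set κ} (hdZ : ∀ n ∈ Z, d n = 0)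
    (hd : Summable d) (hsum : ∑' n, d n = 1) (p q : κ) :
    ∃ u v : Fin 1 → E, IsDiagonalFamily e d Z p q u v := by
  obtain ⟨u, v, huv⟩ := e.exists_inner_mul_inner_eq hd
  refine ⟨fun _ => u, fun _ => v, ⟨fun i j => ?_, fun n => ?_, fun _ n hn => ?_, ?_⟩⟩
  · rw [Subsingleton.elim (α := Fin 1) i j, if_pos rfl, ← e.tsum_inner_mul_inner, ← hsum]
    exact tsum_congr fun n => (huv n).1
  · simpa using (huv n).1
  · exact (huv n).2 (hdZ n hn)
  · intro i hi
    exact absurd (Subsingleton.elim (α := Fin 1) i 0) hi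

theorem Orthonormal.inner_mul_inner_slots {κ : Type*} [DecidableEq κ] {e : κ → E}
    (he : Orthonormal 𝕜 e) {p q p' q' : κ} (hpq : p ≠ q) (hp'p : p' ≠ p) (hp'q : p' ≠ q)
    (hq'p : q' ≠ p) (hq'q : q' ≠ q) (hp'q' : p' ≠ q') (a b α β γ δ : 𝕜) (n : κ) :
    ⟪e p + e q + (γ • e p' - δ • e q'), e n⟫_𝕜 *
        ⟪e n, a • e p + b • e q + (α • e p' - β • e q')⟫_𝕜 =
      (Pi.single p a + Pi.single q b + Pi.single p' (conj γ * α) + Pi.single q' (conj δ * β) :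
        κ → 𝕜) n := by
  have he' := orthonormal_iff_ite.mp he
  simp only [inner_add_left, inner_add_right, inner_sub_left, inner_sub_right, inner_smul_left,
    inner_smul_right, he', Pi.add_apply, Pi.single_apply, eq_comm (b := n)]
  rcases eq_or_ne n p with rfl | hnp
  · simp [hpq, hp'p.symm, hq'p.symm]
  rcases eq_or_ne n q with rfl | hnq
  · simp [hpq.symm, hp'q.symm, hq'q.symm]
  rcases eq_or_ne n p' with rfl | hnp'
  · simp [hnp, hnq, hp'q']
  rcases eq_or_ne n q' with rfl | hnq'
  · simp [hnp, hnq, hp'q'.symm]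
  simp [hnp, hnq, hnp', hnq']

theorem IsDiagonalFamily.cons {d T : κ → 𝕜} {Z Z' : Set κ} {p q p' q' : κ} {k : ℕ}
    {U V : Fin (k + 1) → E} {u₀ v₀ : E} (hF : IsDiagonalFamily e d Z' p' q' U V)
    (hZZ' : Z ⊆ Z') (hpZ' : p ∈ Z') (hqZ' : q ∈ Z')
    (htop : ∀ n, ⟪v₀, e n⟫_𝕜 * ⟪e n, u₀⟫_𝕜 = T n) (hT : HasSum T 1)
    (hVu₀ : ∀ i, ⟪V i, u₀⟫_𝕜 = 0) (hv₀U : ∀ j, ⟪v₀, U j⟫_𝕜 = 0)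
    (hZ : ∀ n ∈ Z, ⟪e n, u₀⟫_𝕜 = 0 ∧ ⟪v₀, e n⟫_𝕜 = 0) :
    IsDiagonalFamily e (d + T) Z p q (Fin.cons u₀ U) (Fin.cons v₀ V) := by
  have hv₀u₀ : ⟪v₀, u₀⟫_𝕜 = 1 := by
    rw [← e.tsum_inner_mul_inner, ← hT.tsum_eq]
    exact tsum_congr htop
  refine ⟨hF.isBiorthogonal.cons hv₀u₀ hVu₀ hv₀U, fun n => ?_, fun i n hn => ?_,
    fun i hi n hn => ?_⟩
  · simp [Fin.sum_univ_succ, htop, hF.diag_eq, add_comm]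
  · cases i using Fin.cases with
    | zero => exact hZ n hn
    | succ j => exact hF.vanish j n (hZZ' hn)
  · cases i using Fin.cases with
    | zero => exact absurd rfl hi
    | succ j => exact hF.vanish j n (by rcases hn with rfl | rfl <;> assumption)

theorem IsDiagonalFamily.exists_cons [DecidableEq κ] {d : κ → 𝕜} {Z : Set κ} {p q p' q' : κ}
    {k : ℕ} {U V : Fin (k + 1) → E} (hF : IsDiagonalFamily e d (insert p (insert q Z)) p' q' U V)
    (hpq : p ≠ q) (hp' : p' ∉ insert p (insert q Z)) (hq' : q' ∉ insert p (insert q Z))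
    (hp'q' : p' ≠ q') (hpZ : p ∉ Z) (hqZ : q ∉ Z) {a b c s t : 𝕜} (hs : s = c * d q')
    (ht : t = c * d p') (habst : a + b + s + t = 1) :
    ∃ u₀ v₀, IsDiagonalFamily e
      (d + (Pi.single p a + Pi.single q b + Pi.single p' s + Pi.single q' t)) Z p q
      (Fin.cons u₀ U) (Fin.cons v₀ V) := by
  obtain ⟨hp'p, hp'q, hp'Z⟩ : p' ≠ p ∧ p' ≠ q ∧ p' ∉ Z := by simpa using hp'
  obtain ⟨hq'p, hq'q, hq'Z⟩ : q' ≠ p ∧ q' ≠ q ∧ q' ∉ Z := by simpa using hq'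
  -- on the coordinates `p'`, `q'`, the new `u₀` is orthogonal to `V 0` and `v₀` to `U 0`
  set u₀ := a • e p + b • e q + (⟪V 0, e q'⟫_𝕜 • e p' - ⟪V 0, e p'⟫_𝕜 • e q')
  set v₀ := e p + e q + ((conj c * ⟪U 0, e q'⟫_𝕜) • e p' - (conj c * ⟪U 0, e p'⟫_𝕜) • e q')
  have htop n : ⟪v₀, e n⟫_𝕜 * ⟪e n, u₀⟫_𝕜 =
      (Pi.single p a + Pi.single q b + Pi.single p' s + Pi.single q' t : κ → 𝕜) n := by
    rw [e.orthonormal.inner_mul_inner_slots hpq hp'p hp'q hq'p hq'q hp'q', hs, ht,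
      ← hF.diag_eq_slot (n := p') (by simp), ← hF.diag_eq_slot (n := q') (by simp)]
    simp only [map_mul, RCLike.conj_conj, inner_conj_symm]
    ring_nf
  refine ⟨u₀, v₀, hF.cons ((Set.subset_insert _ _).trans (Set.subset_insert _ _)) (by simp)
    (by simp) htop ?_ (fun i => ?_) (fun j => ?_) ?_⟩
  · rw [← habst]
    exact (((hasSum_pi_single p a).add (hasSum_pi_single q b)).add
      (hasSum_pi_single p' s)).add (hasSum_pi_single q' t)
  · simp only [u₀, inner_add_right, inner_sub_right, inner_smul_right,
      (hF.vanish i p (by simp)).2, (hF.vanish i q (by simp)).2]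
    rcases eq_or_ne i 0 with rfl | hi
    · ring
    · simp [(hF.vanish_slots i hi p' (by simp)).2, (hF.vanish_slots i hi q' (by simp)).2]
  · simp only [v₀, inner_add_left, inner_sub_left, inner_smul_left, (hF.vanish j p (by simp)).1,
      (hF.vanish j q (by simp)).1, map_mul, RCLike.conj_conj, inner_conj_symm]
    rcases eq_or_ne j 0 with rfl | hj
    · ring
    · simp [(hF.vanish_slots j hj p' (by simp)).1, (hF.vanish_slots j hj q' (by simp)).1]
  · intro n hn
    have he := orthonormal_iff_ite.mp e.orthonormal
    have hnp : n ≠ p := fun h => hpZ (h ▸ hn)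
    have hnq : n ≠ q := fun h => hqZ (h ▸ hn)
    have hnp' : n ≠ p' := fun h => hp'Z (h ▸ hn)
    have hnq' : n ≠ q' := fun h => hq'Z (h ▸ hn)
    simp [u₀, v₀, inner_add_left, inner_add_right, inner_sub_left, inner_sub_right,
      inner_smul_left, inner_smul_right, he, hnp, hnq, hnp', hnq', Ne.symm hnp, Ne.symm hnq,
      Ne.symm hnp', Ne.symm hnq']

theorem exists_isDiagonalFamily [Infinite κ] [DecidableEq κ] (k : ℕ) {Z : Set κ} (hZ : Z.Finite)
    {d : κ → 𝕜} (hdZ : ∀ n ∈ Z, d n = 0) (hd : Summable d) (hsum : ∑' n, d n = k + 1) {p q : κ}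
    (hpq : p ≠ q) (hpZ : p ∉ Z) (hqZ : q ∉ Z) :
    ∃ u v : Fin (k + 1) → E, IsDiagonalFamily e d Z p q u v := by
  induction k generalizing Z d p q with
  | zero => exact exists_isDiagonalFamily_zero hdZ hd (by simpa using hsum) p q
  | succ k ih =>
    have hZ' : (insert p (insert q Z)).Finite := (hZ.insert q).insert p
    obtain ⟨p', hp', q', hq', hp'q', c, s, t, hst, hs, ht⟩ :=
      exists_transfer_indices hd.tendsto_cofinite_zero (1 - d p - d q) hZ'
    obtain ⟨hp'p, hp'q, -⟩ : p' ≠ p ∧ p' ≠ q ∧ p' ∉ Z := by simpa using hp'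
    obtain ⟨hq'p, hq'q, -⟩ : q' ≠ p ∧ q' ≠ q ∧ q' ∉ Z := by simpa using hq'
    -- the diagonal of the new pair
    set T : κ → 𝕜 := Pi.single p (d p) + Pi.single q (d q) + Pi.single p' s + Pi.single q' t
    have hT : HasSum T 1 := by
      rw [show (1 : 𝕜) = d p + d q + s + t by linear_combination -hst]
      exact (((hasSum_pi_single p (d p)).add (hasSum_pi_single q (d q))).add
        (hasSum_pi_single p' s)).add (hasSum_pi_single q' t)
    have hTZ' : ∀ n ∈ insert p (insert q Z), T n = d n := by
      rintro n (rfl | rfl | hn)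
      · simp [T, hpq, hp'p.symm, hq'p.symm]
      · simp [T, hpq.symm, hp'q.symm, hq'q.symm]
      · have : n ≠ p ∧ n ≠ q ∧ n ≠ p' ∧ n ≠ q' := by grind
        simp [T, this, hdZ n hn]
    obtain ⟨U, V, hF⟩ := ih hZ' (d := d - T) (fun n hn => sub_eq_zero.2 (hTZ' n hn).symm)
      (hd.sub hT.summable) ((hd.hasSum.sub hT).tsum_eq.trans (by rw [hsum]; push_cast; ring))
      hp'q' hp' hq'
    obtain ⟨u₀, v₀, h⟩ := hF.exists_cons hpq hp' hq' hp'q' hpZ hqZ (a := d p) (b := d q)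
      (c := c) (s := s) (t := t)
      (by simp [T, hs, hq'p, hq'q, hp'q'.symm]) (by simp [T, ht, hp'p, hp'q, hp'q'])
      (by linear_combination hst)
    exact ⟨_, _, sub_add_cancel d T ▸ h⟩

end DiagonalFamily

end

/-- An absolutely summable sequence `⟨d n⟩` is the diagonal, in some
orthonormal basis, of a nonzero finite-rank idempotent on a separable
infinite-dimensional Hilbert space iff its sum is a positive integer. -/
theorem finite_rank_idempotent_diagonal_iff {H : Type*} [NormedAddCommGroup H]
    [InnerProductSpace ℂ H] [CompleteSpace H] (e₀ : HilbertBasis ℕ ℂ H)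
    (d : ℕ → ℂ) (hd : Summable fun n => ‖d n‖) :
    (∃ D : H →L[ℂ] H, D ∘L D = D ∧ D ≠ 0 ∧ FiniteDimensional ℂ (LinearMap.range (D : H →ₗ[ℂ] H)) ∧
        ∃ e : HilbertBasis ℕ ℂ H, ∀ n, (inner ℂ (e n) (D (e n)) : ℂ) = d n) ↔
      ∃ m : ℕ, 0 < m ∧ (∑' n, d n) = (m : ℂ) := by
  constructor
  · rintro ⟨D, hD, hD0, hfin, e, he⟩
    obtain ⟨k, u, v, huv, rfl⟩ := exists_isBiorthogonal_eq_sum_rankOne (𝕜 := ℂ) hD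
    refine ⟨k, Nat.pos_of_ne_zero fun hk => hD0 (by subst hk; simp), ?_⟩
    simpa using ((huv.hasSum_inner_sum_rankOne_apply e).congr_fun fun n => (he n).symm).tsum_eq
  · rintro ⟨m, hm, hsum⟩
    obtain ⟨k, rfl⟩ := Nat.exists_eq_add_one_of_ne_zero hm.ne'
    obtain ⟨u, v, huv⟩ := exists_isDiagonalFamily (e := e₀) k Set.finite_empty (fun _ h => h.elim)
      hd.of_norm (by simpa using hsum) zero_ne_one (Set.notMem_empty 0) (Set.notMem_empty 1)
    exact ⟨_, huv.isBiorthogonal.isIdempotentElem, huv.isBiorthogonal.sum_rankOne_ne_zero,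
      finiteDimensional_range_sum_rankOne, e₀,
      fun n => by rw [inner_sum_rankOne_apply, huv.diag_eq]⟩
end

section
/- Let D ∈ B(H⊕H) be the idempotent with block form [[I,0],[T,0]] where T ∈ B(H) is normal. Then the negative part (Re D)₋ of the real part of D is trace class if and only if T is a Hilbert–Schmidt operator. -/
/-!
Write `D = R + iJ` with `R = Re D`, `J = Im D` self-adjoint. Idempotence `D² = D` gives
`R² - R = J²`, and for `D (x, y) = (x, T x)` one computes `‖J z‖² = (‖T x‖² + ‖T* y‖²) / 4`.
With `R = P₊ - P₋` and `P₊ P₋ = 0` the left side is `(P₊² - P₊) + (P₋² + P₋)`. Since `R² ≥ R`,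
also `P₊² ≥ P₊`: `P₊` vanishes on the closure of the range of `P₋`, and `P₋` on its orthogonal
complement. Hence `P₋ ≤ J²`, and the trace of `P₋` is bounded by the Hilbert–Schmidt norms of
`T` and `T*`. Conversely, the form of `R` vanishes on vectors `z = (0, y)`, so there
`⟪z, P₊ z⟫ = ⟪z, P₋ z⟫` and `‖J z‖² = ‖P₊ z‖² + ‖P₋ z‖² ≤ (‖P₊‖ + ‖P₋‖) ⟪z, P₋ z⟫`;
summing over `z = (0, e j)` bounds the Hilbert–Schmidt norm of `T*`, which equals that of `T`.
-/

open ContinuousLinearMap ComplexStarModule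
open scoped InnerProductSpace InnerProduct

lemma IsIdempotentElem.realPart_mul_self_sub_realPart {A : Type*} [NonUnitalNonAssocRing A]
    [StarRing A] [Module ℂ A] [IsScalarTower ℂ A A] [SMulCommClass ℂ A A] [StarModule ℂ A]
    {a : A} (ha : IsIdempotentElem a) :
    (ℜ a : A) * ℜ a - ℜ a = ℑ a * ℑ a := by
  rw [realPart_apply_coe, imaginaryPart_apply_coe]
  simp only [smul_mul_assoc, mul_smul_comm, add_mul, mul_add, sub_mul, mul_sub, ha.eq,
    ha.star.eq]
  match_scalars
  all_goals ring_nf; rw [Complex.I_sq]; ring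

namespace HilbertBasis

variable {ι κ ν 𝕜 E F G : Type*} [RCLike 𝕜] [NormedAddCommGroup E] [InnerProductSpace 𝕜 E]
  [NormedAddCommGroup F] [InnerProductSpace 𝕜 F] [NormedAddCommGroup G] [InnerProductSpace 𝕜 G]

lemma hasSum_norm_inner_sq (b : HilbertBasis ι 𝕜 E) (x : E) :
    HasSum (fun i => ‖⟪b i, x⟫_𝕜‖ ^ 2) (‖x‖ ^ 2) := by
  simpa [b.repr_apply_apply, b.repr.norm_map] using lp.hasSum_norm (p := 2) (by simp) (b.repr x)

lemma eq_zero_of_forall_inner_eq_zero (b : HilbertBasis ι 𝕜 E) {x : E}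
    (hx : ∀ i, ⟪b i, x⟫_𝕜 = 0) : x = 0 := by
  have h := b.hasSum_norm_inner_sq x
  simp only [hx, norm_zero, zero_pow two_ne_zero] at h
  simpa using h.unique hasSum_zero

variable [CompleteSpace E] [CompleteSpace F] [CompleteSpace G]

lemma summable_norm_adjoint_apply_sq_iff (S : E →L[𝕜] F) (b : HilbertBasis ι 𝕜 E)
    (c : HilbertBasis κ 𝕜 F) :
    Summable (fun j => ‖(S†) (c j)‖ ^ 2) ↔ Summable (fun i => ‖S (b i)‖ ^ 2) := by
  set f : ι × κ → ℝ := fun p => ‖⟪c p.2, S (b p.1)⟫_𝕜‖ ^ 2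
  have hf : 0 ≤ f := fun _ => by positivity
  have hrow (i : ι) : HasSum (fun j => f (i, j)) (‖S (b i)‖ ^ 2) :=
    c.hasSum_norm_inner_sq (S (b i))
  have hcol (j : κ) : HasSum (fun i => f (i, j)) (‖(S†) (c j)‖ ^ 2) := by
    refine (b.hasSum_norm_inner_sq ((S†) (c j))).congr_fun fun i => ?_
    simp only [f, adjoint_inner_right, norm_inner_symm]
  have h₁ : Summable f ↔ Summable fun i => ‖S (b i)‖ ^ 2 := by
    simp only [summable_prod_of_nonneg hf, fun i => (hrow i).summable, fun i => (hrow i).tsum_eq,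
      implies_true, true_and]
  have h₂ : Summable f ↔ Summable fun j => ‖(S†) (c j)‖ ^ 2 := by
    rw [← (Equiv.prodComm κ ι).summable_iff,
      summable_prod_of_nonneg (f := f ∘ Equiv.prodComm κ ι) fun _ => hf _]
    simp only [Function.comp_def, Equiv.prodComm_apply, Prod.swap_prod_mk,
      fun j => (hcol j).summable, fun j => (hcol j).tsum_eq, implies_true, true_and]
  exact h₂.symm.trans h₁

lemma summable_norm_apply_sq_iff (S : E →L[𝕜] F) (b : HilbertBasis ι 𝕜 E)
    (b' : HilbertBasis κ 𝕜 E) :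
    Summable (fun i => ‖S (b i)‖ ^ 2) ↔ Summable (fun j => ‖S (b' j)‖ ^ 2) := by
  obtain ⟨w, c, -⟩ := exists_hilbertBasis 𝕜 F
  rw [← summable_norm_adjoint_apply_sq_iff S b c, summable_norm_adjoint_apply_sq_iff S b' c]

protected noncomputable def reindex (b : HilbertBasis ι 𝕜 E) (σ : ι ≃ ν) : HilbertBasis ν 𝕜 E :=
  HilbertBasis.mk (b.orthonormal.comp _ σ.symm.injective) <| by
    rw [σ.symm.surjective.range_comp, b.dense_span]

@[simp]
lemma reindex_apply (b : HilbertBasis ι 𝕜 E) (σ : ι ≃ ν) (i : ι) : b.reindex σ (σ i) = b i := by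
  simp [HilbertBasis.reindex]

protected noncomputable def prod (b : HilbertBasis ι 𝕜 E) (c : HilbertBasis κ 𝕜 F) :
    HilbertBasis (ι ⊕ κ) 𝕜 (WithLp 2 (E × F)) :=
  HilbertBasis.mkOfOrthogonalEqBot
    (v := Sum.elim (fun i => WithLp.toLp 2 (b i, 0)) fun j => WithLp.toLp 2 (0, c j))
    (by
      classical
      rw [orthonormal_iff_ite]
      rintro (i | i) (j | j) <;>
        simp [orthonormal_iff_ite.mp b.orthonormal, orthonormal_iff_ite.mp c.orthonormal])
    (by
      refine (Submodule.eq_bot_iff _).mpr fun x hx => ?_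
      have h (k : ι ⊕ κ) := (Submodule.mem_orthogonal _ x).mp hx _ (Submodule.subset_span ⟨k, rfl⟩)
      have hfst : x.fst = 0 := b.eq_zero_of_forall_inner_eq_zero fun i => by simpa using h (.inl i)
      have hsnd : x.snd = 0 := c.eq_zero_of_forall_inner_eq_zero fun j => by simpa using h (.inr j)
      exact WithLp.ofLp_injective 2 (Prod.ext hfst hsnd))

@[simp]
lemma prod_apply_inl (b : HilbertBasis ι 𝕜 E) (c : HilbertBasis κ 𝕜 F) (i : ι) :
    b.prod c (.inl i) = WithLp.toLp 2 (b i, 0) := by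
  simp [HilbertBasis.prod]

@[simp]
lemma prod_apply_inr (b : HilbertBasis ι 𝕜 E) (c : HilbertBasis κ 𝕜 F) (j : κ) :
    b.prod c (.inr j) = WithLp.toLp 2 (0, c j) := by
  simp [HilbertBasis.prod]

lemma summable_norm_apply_fst_sq (S : E →L[𝕜] F) (b : HilbertBasis ι 𝕜 E)
    (e : HilbertBasis κ 𝕜 (WithLp 2 (E × G))) (h : Summable fun i => ‖S (b i)‖ ^ 2) :
    Summable fun k => ‖S (e k).fst‖ ^ 2 := by
  obtain ⟨w, c, -⟩ := exists_hilbertBasis 𝕜 G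
  change Summable fun k => ‖(S ∘L WithLp.fstL 2 𝕜 E G) (e k)‖ ^ 2
  rw [← summable_norm_apply_sq_iff _ (b.prod c)]
  exact .sum _ (by simpa [Function.comp_def] using h) (by simp [Function.comp_def])

lemma summable_norm_apply_snd_sq (S : G →L[𝕜] F) (b : HilbertBasis ι 𝕜 G)
    (e : HilbertBasis κ 𝕜 (WithLp 2 (E × G))) (h : Summable fun i => ‖S (b i)‖ ^ 2) :
    Summable fun k => ‖S (e k).snd‖ ^ 2 := by
  obtain ⟨w, c, -⟩ := exists_hilbertBasis 𝕜 E
  change Summable fun k => ‖(S ∘L WithLp.sndL 2 𝕜 E G) (e k)‖ ^ 2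
  rw [← summable_norm_apply_sq_iff _ (c.prod b)]
  exact .sum _ (by simp [Function.comp_def]) (by simpa [Function.comp_def] using h)

end HilbertBasis

namespace ContinuousLinearMap

variable {𝕜 V : Type*} [RCLike 𝕜] [NormedAddCommGroup V] [InnerProductSpace 𝕜 V]

lemma IsPositive.norm_apply_sq_le {E : Type*} [NormedAddCommGroup E] [InnerProductSpace ℂ E]
    [CompleteSpace E] {P : E →L[ℂ] E} (hP : P.IsPositive) (z : E) :
    ‖P z‖ ^ 2 ≤ ‖P‖ * RCLike.re ⟪z, P z⟫_ℂ := by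
  obtain ⟨S, hS, rfl⟩ : ∃ S : E →L[ℂ] E, IsSelfAdjoint S ∧ S * S = P :=
    ⟨CFC.sqrt P, (CFC.sqrt_nonneg P).isSelfAdjoint,
      CFC.sqrt_mul_sqrt_self P ((nonneg_iff_isPositive P).mpr hP)⟩
  have hnorm : ‖S * S‖ = ‖S‖ ^ 2 := by
    nth_rw 1 [← hS.star_eq]
    rw [CStarRing.norm_star_mul_self, sq]
  have hinner : RCLike.re ⟪z, (S * S) z⟫_ℂ = ‖S z‖ ^ 2 := by
    rw [mul_apply_eq_comp, ← adjoint_inner_left, ← star_eq_adjoint, hS.star_eq,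
      inner_self_eq_norm_sq]
  rw [hnorm, hinner, ← mul_pow, mul_apply_eq_comp]
  gcongr
  exact S.le_opNorm (S z)

variable {P Q : V →L[𝕜] V}

lemma norm_sub_apply_sq_of_comp_eq_zero (hP : P.IsPositive) (hPQ : P ∘L Q = 0) (z : V) :
    ‖(P - Q) z‖ ^ 2 = ‖P z‖ ^ 2 + ‖Q z‖ ^ 2 := by
  have h : ⟪P z, Q z⟫_𝕜 = 0 := by
    rw [hP.inner_left_eq_inner_right, ← comp_apply, hPQ, zero_apply, inner_zero_right]
  rw [sub_apply, norm_sub_sq (𝕜 := 𝕜), h, map_zero, mul_zero, sub_zero]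

lemma re_inner_apply_le_norm_apply_sq_of_comp_eq_zero [CompleteSpace V] (hP : P.IsPositive)
    (hQ : Q.IsPositive) (hPQ : P ∘L Q = 0)
    (h : ∀ z, RCLike.re ⟪z, (P - Q) z⟫_𝕜 ≤ ‖(P - Q) z‖ ^ 2) (z : V) :
    RCLike.re ⟪z, P z⟫_𝕜 ≤ ‖P z‖ ^ 2 := by
  obtain ⟨v, hv, w, hw, rfl⟩ := Q.ker.exists_add_mem_mem_orthogonal z
  have hPw : P w = 0 := by
    rw [orthogonal_ker, hQ.isSelfAdjoint.adjoint_eq] at hw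
    refine Submodule.topologicalClosure_minimal _ ?_ P.isClosed_ker hw
    rintro _ ⟨u, rfl⟩
    exact congr($hPQ u)
  have hwv : ⟪w, P v⟫_𝕜 = 0 := by rw [← hP.inner_left_eq_inner_right, hPw, inner_zero_left]
  have hQv : Q v = 0 := hv
  have hv' := h v
  rw [sub_apply, hQv, sub_zero] at hv'
  simpa [hPw, inner_add_left, hwv] using hv'

end ContinuousLinearMap

section RealPart

variable {V : Type*} [NormedAddCommGroup V] [InnerProductSpace ℂ V] [CompleteSpace V]
  {D P Q : V →L[ℂ] V}

lemma re_inner_realPart_apply (D : V →L[ℂ] V) (z : V) :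
    RCLike.re ⟪z, (ℜ D : V →L[ℂ] V) z⟫_ℂ = RCLike.re ⟪z, D z⟫_ℂ := by
  rw [realPart_apply_coe, star_eq_adjoint, smul_apply, add_apply, inner_smul_right_eq_smul,
    inner_add_right, adjoint_inner_right, ← inner_conj_symm z (D z)]
  simp only [RCLike.smul_re, map_add, RCLike.conj_re]
  ring

lemma IsIdempotentElem.norm_realPart_apply_sq_sub_re_inner (hD : IsIdempotentElem D) (z : V) :
    ‖(ℜ D : V →L[ℂ] V) z‖ ^ 2 - RCLike.re ⟪z, (ℜ D : V →L[ℂ] V) z⟫_ℂ =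
      ‖(ℑ D : V →L[ℂ] V) z‖ ^ 2 := by
  have h := congr(RCLike.re ⟪z, $(hD.realPart_mul_self_sub_realPart) z⟫_ℂ)
  simp only [sub_apply, mul_apply_eq_comp, inner_sub_right, map_sub] at h
  have hsq {A : V →L[ℂ] V} (hA : IsSelfAdjoint A) : RCLike.re ⟪z, A (A z)⟫_ℂ = ‖A z‖ ^ 2 := by
    rw [← adjoint_inner_left, ← star_eq_adjoint, hA.star_eq, inner_self_eq_norm_sq]
  rwa [hsq (ℜ D).2, hsq (ℑ D).2] at h

lemma IsIdempotentElem.re_inner_apply_le_norm_imaginaryPart_apply_sq (hD : IsIdempotentElem D)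
    (hP : P.IsPositive) (hQ : Q.IsPositive) (hPQ : P ∘L Q = 0) (hR : P - Q = ℜ D) (z : V) :
    RCLike.re ⟪z, Q z⟫_ℂ ≤ ‖(ℑ D : V →L[ℂ] V) z‖ ^ 2 := by
  have key (x : V) := hD.norm_realPart_apply_sq_sub_re_inner x
  rw [← hR] at key
  have hP_le := re_inner_apply_le_norm_apply_sq_of_comp_eq_zero hP hQ hPQ
    (fun x => by linarith [key x, sq_nonneg ‖(ℑ D : V →L[ℂ] V) x‖]) z
  rw [← key, norm_sub_apply_sq_of_comp_eq_zero hP hPQ, sub_apply, inner_sub_right, map_sub]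
  linarith [sq_nonneg ‖Q z‖]

lemma IsIdempotentElem.norm_imaginaryPart_apply_sq_le (hD : IsIdempotentElem D)
    (hP : P.IsPositive) (hQ : Q.IsPositive) (hPQ : P ∘L Q = 0) (hR : P - Q = ℜ D) {z : V}
    (hz : RCLike.re ⟪z, D z⟫_ℂ = 0) :
    ‖(ℑ D : V →L[ℂ] V) z‖ ^ 2 ≤ (‖P‖ + ‖Q‖) * RCLike.re ⟪z, Q z⟫_ℂ := by
  have hPQ_re : RCLike.re ⟪z, P z⟫_ℂ = RCLike.re ⟪z, Q z⟫_ℂ := by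
    rw [← re_inner_realPart_apply, ← hR, sub_apply, inner_sub_right, map_sub] at hz
    linarith
  rw [← hD.norm_realPart_apply_sq_sub_re_inner, re_inner_realPart_apply, hz, ← hR,
    norm_sub_apply_sq_of_comp_eq_zero hP hPQ]
  have hPz := hP.norm_apply_sq_le z
  rw [hPQ_re] at hPz
  linarith [hQ.norm_apply_sq_le z]

end RealPart

section GraphProjection

variable {H : Type*} [NormedAddCommGroup H] [InnerProductSpace ℂ H]

noncomputable def graphProjection (T : H →L[ℂ] H) : WithLp 2 (H × H) →L[ℂ] WithLp 2 (H × H) :=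
  (WithLp.prodContinuousLinearEquiv 2 ℂ H H).symm.toContinuousLinearMap ∘L
    ((ContinuousLinearMap.id ℂ H).prod T ∘L WithLp.fstL 2 ℂ H H)

@[simp]
lemma graphProjection_apply (T : H →L[ℂ] H) (z : WithLp 2 (H × H)) :
    graphProjection T z = WithLp.toLp 2 (z.fst, T z.fst) :=
  rfl

lemma isIdempotentElem_graphProjection (T : H →L[ℂ] H) : IsIdempotentElem (graphProjection T) := by
  ext z : 1
  simp [mul_apply_eq_comp]

lemma adjoint_graphProjection_apply [CompleteSpace H] (T : H →L[ℂ] H) (z : WithLp 2 (H × H)) :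
    ((graphProjection T)†) z = WithLp.toLp 2 (z.fst + (T†) z.snd, 0) := by
  refine ext_inner_left ℂ fun w => ?_
  simp [adjoint_inner_right, inner_add_right]

lemma norm_imaginaryPart_graphProjection_apply_sq [CompleteSpace H] (T : H →L[ℂ] H)
    (z : WithLp 2 (H × H)) :
    ‖(ℑ (graphProjection T) : WithLp 2 (H × H) →L[ℂ] WithLp 2 (H × H)) z‖ ^ 2 =
      (‖T z.fst‖ ^ 2 + ‖(T†) z.snd‖ ^ 2) / 4 := by
  rw [imaginaryPart_apply_coe, star_eq_adjoint]
  simp only [sub_apply, graphProjection_apply, adjoint_graphProjection_apply, smul_apply,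
    ← WithLp.toLp_sub, Prod.mk_sub_mk, sub_add_cancel_left, sub_zero, norm_smul, mul_pow,
    WithLp.prod_norm_sq_eq_of_L2, WithLp.toLp_fst, WithLp.toLp_snd, norm_neg, Complex.norm_I,
    norm_inv, Real.norm_ofNat]
  ring

end GraphProjection

section NegativePart

variable {ι κ H : Type*} [NormedAddCommGroup H] [InnerProductSpace ℂ H] [CompleteSpace H]
  {T : H →L[ℂ] H} {P Q : WithLp 2 (H × H) →L[ℂ] WithLp 2 (H × H)}

lemma summable_norm_adjoint_apply_sq_of_summable_re_inner (hP : P.IsPositive) (hQ : Q.IsPositive)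
    (hPQ : P ∘L Q = 0) (hR : P - Q = ℜ (graphProjection T)) (y : ι → H)
    (h : Summable fun j => RCLike.re ⟪WithLp.toLp 2 (0, y j), Q (WithLp.toLp 2 (0, y j))⟫_ℂ) :
    Summable fun j => ‖(T†) (y j)‖ ^ 2 := by
  refine .of_nonneg_of_le (fun _ => by positivity) (fun j => ?_) (h.mul_left (4 * (‖P‖ + ‖Q‖)))
  have hz := (isIdempotentElem_graphProjection T).norm_imaginaryPart_apply_sq_le hP hQ hPQ hR
    (z := WithLp.toLp 2 (0, y j)) (by simp)
  rw [norm_imaginaryPart_graphProjection_apply_sq, WithLp.toLp_fst, WithLp.toLp_snd, map_zero,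
    norm_zero] at hz
  linarith

lemma summable_re_inner_apply_of_summable_norm_apply_sq (hP : P.IsPositive) (hQ : Q.IsPositive)
    (hPQ : P ∘L Q = 0) (hR : P - Q = ℜ (graphProjection T)) (b : HilbertBasis ι ℂ H)
    (e : HilbertBasis κ ℂ (WithLp 2 (H × H))) (h : Summable fun i => ‖T (b i)‖ ^ 2) :
    Summable fun k => RCLike.re ⟪e k, Q (e k)⟫_ℂ := by
  have hfst := b.summable_norm_apply_fst_sq T e h
  have hsnd := b.summable_norm_apply_snd_sq (T†) e
    ((b.summable_norm_adjoint_apply_sq_iff T b).mpr h)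
  refine .of_nonneg_of_le (fun k => hQ.re_inner_nonneg_right _) (fun k => ?_)
    ((hfst.add hsnd).div_const 4)
  exact ((isIdempotentElem_graphProjection T).re_inner_apply_le_norm_imaginaryPart_apply_sq
    hP hQ hPQ hR (e k)).trans_eq (norm_imaginaryPart_graphProjection_apply_sq T (e k))

end NegativePart

theorem re_idempotent_negPart_traceClass_iff_hilbertSchmidt_general {H : Type*} [NormedAddCommGroup H]
    [InnerProductSpace ℂ H] [CompleteSpace H] (e₀ : HilbertBasis ℕ ℂ H)
    (T : H →L[ℂ] H)
    (D Pp Pm : WithLp 2 (H × H) →L[ℂ] WithLp 2 (H × H))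
    (hD : ∀ x y : H, D ((WithLp.equiv 2 (H × H)).symm (x, y))
      = (WithLp.equiv 2 (H × H)).symm (x, T x))
    (hPp : Pp.IsPositive) (hPm : Pm.IsPositive)
    (hdecomp : Pp - Pm = (1 / 2 : ℂ) • (D + ContinuousLinearMap.adjoint D))
    (horth : Pp ∘L Pm = 0) :
    (∀ e : HilbertBasis ℕ ℂ (WithLp 2 (H × H)),
        Summable (fun i => (inner ℂ (e i) (Pm (e i)) : ℂ))) ↔
      (∀ e : HilbertBasis ℕ ℂ H, Summable (fun i => ‖T (e i)‖ ^ 2)) := by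
  obtain rfl : D = graphProjection T := ext fun z => hD z.fst z.snd
  have hR : Pp - Pm = ℜ (graphProjection T) := by
    rw [hdecomp, realPart_apply_coe, star_eq_adjoint, one_div, ← Complex.coe_smul]
    norm_num
  constructor
  · intro htc e
    rw [← e.summable_norm_adjoint_apply_sq_iff T e]
    refine summable_norm_adjoint_apply_sq_of_summable_re_inner hPp hPm horth hR e ?_
    set σ := Equiv.natSumNatEquivNat
    have := (Complex.reCLM.summable (htc ((e.prod e).reindex σ))).comp_injective
      (σ.injective.comp Sum.inr_injective)
    simpa only [Function.comp_def, HilbertBasis.reindex_apply, HilbertBasis.prod_apply_inr,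
      Complex.reCLM_apply, ← RCLike.re_to_complex] using this
  · intro hs e
    have hre := summable_re_inner_apply_of_summable_norm_apply_sq hPp hPm horth hR e₀ e (hs e₀)
    refine (Complex.summable_ofReal.mpr hre).congr fun k => ?_
    exact (Complex.eq_re_of_ofReal_le (hPm.inner_nonneg_right (e k))).symm

/-- Let `D ∈ B(H ⊕ H)` be the idempotent with block form `[[I,0],[T,0]]`
(`D (x, y) = (x, T x)`), `T` normal. Then the negative part `Pm` of `Re D`
(given by a decomposition `Re D = Pp − Pm` into positive operators with `Pp Pm = 0`)
is trace class (summable diagonal in every orthonormal basis) iff `T` is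
Hilbert–Schmidt (`Σ ‖T e i‖²` converges in every orthonormal basis). -/
theorem re_idempotent_negPart_traceClass_iff_hilbertSchmidt {H : Type*} [NormedAddCommGroup H]
    [InnerProductSpace ℂ H] [CompleteSpace H] (e₀ : HilbertBasis ℕ ℂ H)
    (T : H →L[ℂ] H) (hT : IsStarNormal T)
    (D Pp Pm : WithLp 2 (H × H) →L[ℂ] WithLp 2 (H × H))
    (hD : ∀ x y : H, D ((WithLp.equiv 2 (H × H)).symm (x, y))
      = (WithLp.equiv 2 (H × H)).symm (x, T x))
    (hPp : Pp.IsPositive) (hPm : Pm.IsPositive)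
    (hdecomp : Pp - Pm = (1 / 2 : ℂ) • (D + ContinuousLinearMap.adjoint D))
    (horth : Pp ∘L Pm = 0) :
    (∀ e : HilbertBasis ℕ ℂ (WithLp 2 (H × H)),
        Summable (fun i => (inner ℂ (e i) (Pm (e i)) : ℂ))) ↔
      (∀ e : HilbertBasis ℕ ℂ H, Summable (fun i => ‖T (e i)‖ ^ 2)) :=
  re_idempotent_negPart_traceClass_iff_hilbertSchmidt_general e₀ T D Pp Pm hD hPp hPm hdecomp horth
end
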